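/- arXiv:2211.04245 — 11 statements merged into one kernel-verified Lean document; each statement's English description precedes it below -/
import Mathlib

section
/- Let Q ⊆ ℝ^n be a convex set, ν ∈ [0,1], M_ν > 0, and let h : ℝ^n → ℝ be differentiable with ‖∇h(x) − ∇h(y)‖ ≤ M_ν‖x − y‖^ν for all x, y ∈ Q. For δ > 0 set M(ν,δ) := δ^{(ν−1)/(ν+1)} · M_ν^{2/(ν+1)}. Then for every M ≥ M(ν,δ) and all x, y ∈ Q: h(x) ≤ h(y) + ⟨∇h(y), x − y⟩ + (M/2)‖x − y‖² + δ/2. -/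
/-!
Along the segment from `y` to `x`, the Hölder bound on the gradient integrates to
`h x ≤ h y + ⟪∇h y, x - y⟫ + Mν / (ν + 1) * ‖x - y‖ ^ (ν + 1)`. Weighted AM-GM with weights
`(1 + ν) / 2` and `(1 - ν) / 2` trades the power `ν + 1` for the powers `2` and `0`:
`Mν / (ν + 1) * t ^ (ν + 1) ≤ M / 2 * t ^ 2 + δ / 2` holds for all `t ≥ 0` once `M ≥ M(ν, δ)`.
-/

open RealInnerProductSpace Set

theorem sub_sub_deriv_le_div_of_deriv_sub_le_rpow {φ φ' : ℝ → ℝ} {ν K : ℝ} (hν : 0 ≤ ν)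
    (hφ : ∀ t ∈ Icc (0 : ℝ) 1, HasDerivAt φ (φ' t) t)
    (hbound : ∀ t ∈ Ioo (0 : ℝ) 1, φ' t - φ' 0 ≤ K * t ^ ν) :
    φ 1 - φ 0 - φ' 0 ≤ K / (ν + 1) := by
  have hν1 : ν + 1 ≠ 0 := by linarith
  set F : ℝ → ℝ := fun t => K / (ν + 1) * t ^ (ν + 1) + t * φ' 0 - φ t
  have hF : ∀ t ∈ Icc (0 : ℝ) 1, HasDerivAt F (K * t ^ ν + φ' 0 - φ' t) t := by
    intro t ht
    have hpow : HasDerivAt (fun s : ℝ => s ^ (ν + 1)) ((ν + 1) * t ^ ν) t := by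
      simpa using Real.hasDerivAt_rpow_const (x := t) (p := ν + 1) (Or.inr (by linarith))
    refine (((hpow.const_mul (K / (ν + 1))).add
      ((hasDerivAt_id t).mul_const (φ' 0))).sub (hφ t ht)).congr_deriv ?_
    field_simp
  have hmono : MonotoneOn F (Icc 0 1) := by
    refine monotoneOn_of_deriv_nonneg (convex_Icc 0 1)
      (fun t ht => (hF t ht).continuousAt.continuousWithinAt)
      (fun t ht => (hF t (interior_subset ht)).differentiableAt.differentiableWithinAt)
      fun t ht => ?_
    rw [interior_Icc] at ht
    rw [(hF t (Ioo_subset_Icc_self ht)).deriv]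
    linarith [hbound t ht]
  have := hmono (left_mem_Icc.2 zero_le_one) (right_mem_Icc.2 zero_le_one) zero_le_one
  simp only [F, Real.zero_rpow hν1, Real.one_rpow, mul_zero, zero_mul, mul_one, one_mul,
    add_zero, zero_sub, neg_le_sub_iff_le_add] at this
  linarith

section InnerProductSpace

variable {E : Type*} [NormedAddCommGroup E] [InnerProductSpace ℝ E] [CompleteSpace E]

theorem Convex.le_add_inner_gradient_add_rpow_of_holder {Q : Set E} (hQ : Convex ℝ Q)
    {f : E → ℝ} {ν L : ℝ} (hν : 0 ≤ ν) (hf : ∀ x ∈ Q, DifferentiableAt ℝ f x)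
    (hHolder : ∀ x ∈ Q, ∀ y ∈ Q, ‖gradient f x - gradient f y‖ ≤ L * ‖x - y‖ ^ ν)
    {x y : E} (hx : x ∈ Q) (hy : y ∈ Q) :
    f x ≤ f y + ⟪gradient f y, x - y⟫ + L / (ν + 1) * ‖x - y‖ ^ (ν + 1) := by
  set v := x - y
  have hmem : ∀ t ∈ Icc (0 : ℝ) 1, y + t • v ∈ Q := fun t ht => hQ.add_smul_sub_mem hy hx ht
  have hφ : ∀ t ∈ Icc (0 : ℝ) 1,
      HasDerivAt (fun s : ℝ => f (y + s • v)) ⟪gradient f (y + t • v), v⟫ t := by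
    intro t ht
    have hline : HasDerivAt (fun s : ℝ => y + s • v) v t := by
      simpa using ((hasDerivAt_id t).smul_const v).const_add y
    have := (hf _ (hmem t ht)).hasGradientAt.hasFDerivAt.comp_hasDerivAt t hline
    rwa [InnerProductSpace.toDual_apply_apply] at this
  have hbound : ∀ t ∈ Ioo (0 : ℝ) 1, ⟪gradient f (y + t • v), v⟫ - ⟪gradient f (y + (0 : ℝ) • v), v⟫
      ≤ L * ‖v‖ ^ (ν + 1) * t ^ ν := by
    intro t ht
    calc ⟪gradient f (y + t • v), v⟫ - ⟪gradient f (y + (0 : ℝ) • v), v⟫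
        = ⟪gradient f (y + t • v) - gradient f y, v⟫ := by simp [inner_sub_left]
      _ ≤ ‖gradient f (y + t • v) - gradient f y‖ * ‖v‖ := real_inner_le_norm _ _
      _ ≤ L * ‖y + t • v - y‖ ^ ν * ‖v‖ := by
          gcongr
          exact hHolder _ (hmem t (Ioo_subset_Icc_self ht)) _ hy
      _ = L * ‖v‖ ^ (ν + 1) * t ^ ν := by
          rw [add_sub_cancel_left, norm_smul, Real.norm_of_nonneg ht.1.le,
            Real.mul_rpow ht.1.le (norm_nonneg v), Real.rpow_add_one' (norm_nonneg v) (by linarith)]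
          ring
  have := sub_sub_deriv_le_div_of_deriv_sub_le_rpow hν hφ hbound
  simp only [zero_smul, add_zero, one_smul, v, add_sub_cancel] at this
  rw [div_mul_eq_mul_div]
  linarith

end InnerProductSpace

theorem mul_rpow_add_one_le {ν c t : ℝ} (hν0 : 0 ≤ ν) (hν1 : ν ≤ 1) (hc : 0 ≤ c) (ht : 0 ≤ t) :
    c * t ^ (ν + 1) ≤ (ν + 1) / 2 * (c ^ (2 / (ν + 1)) * t ^ 2) + (1 - ν) / 2 := by
  have hν : ν + 1 ≠ 0 := by linarith
  have hamgm := Real.geom_mean_le_arith_mean2_weighted (by linarith : 0 ≤ (ν + 1) / 2)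
    (by linarith : 0 ≤ (1 - ν) / 2) (by positivity : 0 ≤ c ^ (2 / (ν + 1)) * t ^ 2) zero_le_one
    (by ring)
  have hpow : (c ^ (2 / (ν + 1)) * t ^ 2) ^ ((ν + 1) / 2) = c * t ^ (ν + 1) := by
    rw [Real.mul_rpow (by positivity) (by positivity), ← Real.rpow_mul hc, ← Real.rpow_two,
      ← Real.rpow_mul ht, show 2 / (ν + 1) * ((ν + 1) / 2) = 1 by field_simp, Real.rpow_one,
      mul_div_cancel₀ _ two_ne_zero]
  rwa [hpow, Real.one_rpow, mul_one, mul_one] at hamgm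

theorem div_mul_rpow_add_one_le {ν L δ M t : ℝ} (hν0 : 0 ≤ ν) (hν1 : ν ≤ 1) (hL : 0 ≤ L)
    (hδ : 0 < δ) (hM : δ ^ ((ν - 1) / (ν + 1)) * L ^ (2 / (ν + 1)) ≤ M) (ht : 0 ≤ t) :
    L / (ν + 1) * t ^ (ν + 1) ≤ M / 2 * t ^ 2 + δ / 2 := by
  have hν : 0 < ν + 1 := by linarith
  have hMeq : δ ^ ((ν - 1) / (ν + 1)) * L ^ (2 / (ν + 1)) = δ * (L / δ) ^ (2 / (ν + 1)) := by
    rw [Real.div_rpow hL hδ.le, show (ν - 1) / (ν + 1) = 1 - 2 / (ν + 1) by field_simp; ring,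
      Real.rpow_sub hδ, Real.rpow_one]
    ring
  have hamgm := mul_rpow_add_one_le hν0 hν1 (div_nonneg hL hδ.le) ht
  have hscale : L / (ν + 1) * t ^ (ν + 1) = δ / (ν + 1) * (L / δ * t ^ (ν + 1)) := by
    field_simp
  calc L / (ν + 1) * t ^ (ν + 1)
      ≤ δ / (ν + 1) * ((ν + 1) / 2 * ((L / δ) ^ (2 / (ν + 1)) * t ^ 2) + (1 - ν) / 2) := by
        rw [hscale]; gcongr
    _ = (δ * (L / δ) ^ (2 / (ν + 1))) / 2 * t ^ 2 + (1 - ν) / (ν + 1) * (δ / 2) := by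
        field_simp
    _ ≤ M / 2 * t ^ 2 + 1 * (δ / 2) := by
        rw [← hMeq]
        gcongr
        rw [div_le_one hν]; linarith
    _ = M / 2 * t ^ 2 + δ / 2 := by ring

/-- Hölder gradients can be recast into the Lipschitz setting with inexactness `δ`:
for any `M ≥ M(ν,δ) := δ^((ν-1)/(ν+1)) * Mν^(2/(ν+1))`, the approximate quadratic
upper bound holds. -/
theorem holder_to_inexact_lipschitz {n : ℕ} (Q : Set (EuclideanSpace ℝ (Fin n)))
    (hQ : Convex ℝ Q) (ν Mν : ℝ) (hν0 : 0 ≤ ν) (hν1 : ν ≤ 1) (hMν : 0 < Mν)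
    (h : EuclideanSpace ℝ (Fin n) → ℝ) (hdiff : Differentiable ℝ h)
    (hHolder : ∀ x ∈ Q, ∀ y ∈ Q, ‖gradient h x - gradient h y‖ ≤ Mν * ‖x - y‖ ^ ν)
    (δ M : ℝ) (hδ : 0 < δ)
    (hM : δ ^ ((ν - 1) / (ν + 1)) * Mν ^ (2 / (ν + 1)) ≤ M) :
    ∀ x ∈ Q, ∀ y ∈ Q,
      h x ≤ h y + ⟪gradient h y, x - y⟫ + M / 2 * ‖x - y‖ ^ 2 + δ / 2 := by
  intro x hx y hy
  have hdescent := hQ.le_add_inner_gradient_add_rpow_of_holder hν0 (fun z _ => hdiff z)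
    hHolder hx hy
  have hquadratic := div_mul_rpow_add_one_le hν0 hν1 hMν.le hδ hM (norm_nonneg (x - y))
  linarith
end

section
/- Let Q ⊆ ℝ^n be nonempty, closed and convex; let φ : ℝ^n → ℝ be differentiable and 1-strongly convex on Q, i.e. D_φ(x,y) ≥ (1/2)‖x − y‖² for all x, y ∈ Q; let h : ℝ^n → ℝ be differentiable and μ-convex on Q relative to φ with μ ≥ 0, i.e. h(x) ≥ h(y) + ⟨∇h(y), x − y⟩ + μ D_φ(x,y) for all x, y ∈ Q; let g : ℝ^n → ℝ be convex on Q; let A be a real m×n matrix with operator norm ‖A‖ and b ∈ ℝ^m. Let x* ∈ Q with Ax* = b and λ* ∈ ℝ^m satisfy h(x) + g(x) + ⟨λ*, Ax − b⟩ ≥ h(x*) + g(x*) for all x ∈ Q. Let x_k, v_k ∈ Q, λ_k ∈ ℝ^m, and reals α_k > 0, β_k > 0, γ_k > 0, M_{k+1} > 0, δ_{k+1} ≥ 0 be given. Define y_k = (x_k + α_k v_k)/(1+α_k), λ̂_k = λ_k + (α_k/β_k)(A v_k − b), and suppose v_{k+1} ∈ Q and ζ_{k+1} ∈ ℝ^n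 satisfy: (i) g(v) ≥ g(v_{k+1}) + ⟨ζ_{k+1}, v − v_{k+1}⟩ for all v ∈ Q; (ii) γ_k(∇φ(v_{k+1}) − ∇φ(v_k)) = α_k·[ μ(∇φ(y_k) − ∇φ(v_{k+1})) − (∇h(y_k) + ζ_{k+1} + Aᵀλ̂_k) ]. Define x_{k+1} = (x_k + α_k v_{k+1})/(1+α_k), λ_{k+1} = λ_k + (α_k/β_k)(A v_{k+1} − b), γ_{k+1} = (γ_k + μα_k)/(1+α_k), β_{k+1} = β_k/(1+α_k). Assume also the descent estimate h(x_{k+1}) ≤ h(y_k) + ⟨∇h(y_k), x_{k+1} − y_k⟩ + (M_{k+1}/2)‖x_{k+1} − y_k‖² + δ_{k+1}/2 and the step-size relation α_k²(β_k M_{k+1} + ‖A‖²) = γ_k β_k. With E_j := L(x_j, λ*) − L(x*, λ_j) + γ_j D_φ(x*, v_j) + (β_j/2)‖λ_j − λ*‖² for j = k, k+1, one has E_{k+1} − E_k ≤ −α_k E_{k+1} + (δ_{k+1}/2)(1 + α_k). -/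
open RealInnerProductSpace

/-!
Multiply the claim by `1 + α_k`. Since `(1 + α_k) x_{k+1} = x_k + α_k v_{k+1}`, the descent estimate
splits into the relative convexity of `h` at `x_k` and at `x*`; with the convexity of `g` and the
subgradient inequality this leaves the pairing `α_k ⟪∇h(y_k) + ζ_{k+1}, x* - v_{k+1}⟫`, which the
optimality condition for `v_{k+1}` and the three-point identity turn into the Bregman terms of
`E_{k+1}` and `E_k` plus `α_k ⟪λ̂_k, A v_{k+1} - b⟫`. The dual update absorbs this multiplier term
into the change of `β_k/2 ‖λ - λ*‖²`, up to `α_k²/(2β_k) (‖r_{k+1}‖² - 2⟪r_k, r_{k+1}⟫)` with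
`r_j = A v_j - b`, which is at most `α_k²‖A‖²/(2β_k) ‖v_{k+1} - v_k‖²`. By the step-size relation
this and the quadratic term of the descent estimate are paid for by
`γ_k D_φ(v_{k+1}, v_k) ≥ γ_k/2 ‖v_{k+1} - v_k‖²`.
-/

noncomputable def bregman {n : ℕ} (φ : EuclideanSpace ℝ (Fin n) → ℝ)
    (x y : EuclideanSpace ℝ (Fin n)) : ℝ :=
  φ x - φ y - ⟪gradient φ y, x - y⟫

section Relaxation

variable {E : Type*} [AddCommGroup E] [Module ℝ E]

theorem Convex.inv_one_add_smul_add_mem {s : Set E} (hs : Convex ℝ s) {x v : E}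
    (hx : x ∈ s) (hv : v ∈ s) {α : ℝ} (hα : 0 ≤ α) :
    (1 + α)⁻¹ • (x + α • v) ∈ s := by
  have h := hs hx hv (by positivity : (0 : ℝ) ≤ (1 + α)⁻¹) (by positivity : 0 ≤ α * (1 + α)⁻¹)
    (by field_simp)
  convert h using 1
  module

theorem ConvexOn.one_add_mul_le {s : Set E} {g : E → ℝ} (hg : ConvexOn ℝ s g) {x v : E}
    (hx : x ∈ s) (hv : v ∈ s) {α : ℝ} (hα : 0 ≤ α) :
    (1 + α) * g ((1 + α)⁻¹ • (x + α • v)) ≤ g x + α * g v := by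
  have h := hg.2 hx hv (by positivity : (0 : ℝ) ≤ (1 + α)⁻¹) (by positivity : 0 ≤ α * (1 + α)⁻¹)
    (by field_simp)
  rw [show (1 + α)⁻¹ • x + (α * (1 + α)⁻¹) • v = (1 + α)⁻¹ • (x + α • v) by module] at h
  calc (1 + α) * g ((1 + α)⁻¹ • (x + α • v))
      ≤ (1 + α) * ((1 + α)⁻¹ * g x + α * (1 + α)⁻¹ * g v) := by gcongr; simpa using h
    _ = g x + α * g v := by field_simp

end Relaxation

section InnerProduct

variable {E F : Type*} [NormedAddCommGroup E] [NormedSpace ℝ E]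
  [NormedAddCommGroup F] [InnerProductSpace ℝ F]

theorem norm_sq_sub_two_inner_le (a b : F) : ‖b‖ ^ 2 - 2 * ⟪a, b⟫ ≤ ‖b - a‖ ^ 2 := by
  rw [norm_sub_sq_real, real_inner_comm]
  linarith [sq_nonneg ‖a‖]

theorem one_add_mul_inner_map_sub (A : E →L[ℝ] F) (b l : F) (x v : E) {α : ℝ}
    (hα : 1 + α ≠ 0) :
    (1 + α) * ⟪l, A ((1 + α)⁻¹ • (x + α • v)) - b⟫ = ⟪l, A x - b⟫ + α * ⟪l, A v - b⟫ := by
  have h : (1 + α) • (A ((1 + α)⁻¹ • (x + α • v)) - b) = (A x - b) + α • (A v - b) := by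
    rw [map_smul, map_add, map_smul, smul_sub, smul_smul, mul_inv_cancel₀ hα, one_smul]
    module
  rw [← real_inner_smul_right, h, inner_add_right, real_inner_smul_right]

theorem half_mul_norm_sq_dual_update {α β : ℝ} (hβ : β ≠ 0) {l l₁ lhat : F} (ls r₀ r₁ : F)
    (hl₁ : l₁ = l + (α / β) • r₁) (hlhat : lhat = l + (α / β) • r₀) :
    β / 2 * ‖l₁ - ls‖ ^ 2 - α * ⟪lhat - ls, r₁⟫
      = β / 2 * ‖l - ls‖ ^ 2 + α ^ 2 / (2 * β) * (‖r₁‖ ^ 2 - 2 * ⟪r₀, r₁⟫) := by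
  rw [hl₁, hlhat, add_sub_right_comm, add_sub_right_comm, norm_add_sq_real, inner_add_left,
    real_inner_smul_right, real_inner_smul_left, norm_smul, Real.norm_eq_abs, mul_pow, sq_abs]
  field_simp
  ring

end InnerProduct

theorem one_add_mul_sq_add_sq_map_le {E F : Type*} [NormedAddCommGroup E] [NormedSpace ℝ E]
    [NormedAddCommGroup F] [NormedSpace ℝ F] (A : E →L[ℝ] F) (d : E) {α β γ M : ℝ} (hα : 0 ≤ α)
    (hβ : 0 < β) (hM : 0 ≤ M) (hstep : α ^ 2 * (β * M + ‖A‖ ^ 2) = γ * β) :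
    (1 + α) * (M / 2 * ‖(α / (1 + α)) • d‖ ^ 2) + α ^ 2 / (2 * β) * ‖A d‖ ^ 2
      ≤ γ / 2 * ‖d‖ ^ 2 := by
  have hAd : ‖A d‖ ^ 2 ≤ ‖A‖ ^ 2 * ‖d‖ ^ 2 := by
    rw [← mul_pow]
    gcongr
    exact A.le_opNorm d
  have hshrink : (1 + α) * (M / 2 * ((α / (1 + α)) ^ 2 * ‖d‖ ^ 2)) ≤ M / 2 * α ^ 2 * ‖d‖ ^ 2 := by
    rw [show (1 + α) * (M / 2 * ((α / (1 + α)) ^ 2 * ‖d‖ ^ 2))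
        = M / 2 * α ^ 2 * ‖d‖ ^ 2 / (1 + α) by field_simp]
    exact div_le_self (by positivity) (by linarith)
  have hsplit : γ / 2 * ‖d‖ ^ 2
      = M / 2 * α ^ 2 * ‖d‖ ^ 2 + α ^ 2 / (2 * β) * (‖A‖ ^ 2 * ‖d‖ ^ 2) := by
    rw [(eq_div_iff hβ.ne').2 hstep.symm]
    field_simp
  rw [norm_smul, mul_pow, Real.norm_eq_abs, sq_abs, hsplit]
  gcongr

theorem inner_adjoint_sub_of_map_eq {E F : Type*} [NormedAddCommGroup E] [InnerProductSpace ℝ E]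
    [CompleteSpace E] [NormedAddCommGroup F] [InnerProductSpace ℝ F] [CompleteSpace F]
    (A : E →L[ℝ] F) {b : F} {x : E} (hx : A x = b) (l : F) (v : E) :
    ⟪ContinuousLinearMap.adjoint A l, x - v⟫ = -⟪l, A v - b⟫ := by
  rw [ContinuousLinearMap.adjoint_inner_left, map_sub, hx, ← neg_sub, inner_neg_right]

section Bregman

variable {n : ℕ} {Q : Set (EuclideanSpace ℝ (Fin n))} {φ : EuclideanSpace ℝ (Fin n) → ℝ}

theorem bregman_three_point (φ : EuclideanSpace ℝ (Fin n) → ℝ)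
    (x y z : EuclideanSpace ℝ (Fin n)) :
    ⟪gradient φ y - gradient φ z, x - z⟫ = bregman φ x z + bregman φ z y - bregman φ x y := by
  simp only [bregman, inner_sub_left, inner_sub_right]
  ring

theorem bregman_nonneg (hφsc : ∀ x ∈ Q, ∀ y ∈ Q, bregman φ x y ≥ 1 / 2 * ‖x - y‖ ^ 2)
    {x y : EuclideanSpace ℝ (Fin n)} (hx : x ∈ Q) (hy : y ∈ Q) : 0 ≤ bregman φ x y :=
  le_trans (by positivity) (hφsc x hx y hy)

theorem inner_eq_of_mirror_step {α γ μ : ℝ} {v v₁ y u : EuclideanSpace ℝ (Fin n)}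
    (hv₁ : γ • (gradient φ v₁ - gradient φ v)
      = α • (μ • (gradient φ y - gradient φ v₁) - u)) (x : EuclideanSpace ℝ (Fin n)) :
    α * ⟪u, x - v₁⟫ = α * μ * (bregman φ x v₁ + bregman φ v₁ y - bregman φ x y)
      + γ * (bregman φ x v₁ + bregman φ v₁ v - bregman φ x v) := by
  have h := congrArg (fun w => ⟪w, x - v₁⟫) hv₁
  simp only [real_inner_smul_left, inner_sub_left] at h
  have hv := bregman_three_point φ x v v₁
  have hy := bregman_three_point φ x y v₁
  rw [inner_sub_left] at hv hy
  linear_combination h + γ * hv + α * μ * hy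

theorem one_add_mul_le_of_descent {f : EuclideanSpace ℝ (Fin n) → ℝ} {μ α M δ : ℝ}
    (hconv : ∀ x ∈ Q, ∀ y ∈ Q, f x ≥ f y + ⟪gradient f y, x - y⟫ + μ * bregman φ x y)
    (hφsc : ∀ x ∈ Q, ∀ y ∈ Q, bregman φ x y ≥ 1 / 2 * ‖x - y‖ ^ 2) (hμ : 0 ≤ μ)
    {x xs y v₁ x₁ : EuclideanSpace ℝ (Fin n)} (hx : x ∈ Q) (hxs : xs ∈ Q) (hy : y ∈ Q)
    (hα : 0 ≤ α) (hx₁ : x₁ = (1 + α)⁻¹ • (x + α • v₁))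
    (hdescent : f x₁ ≤ f y + ⟪gradient f y, x₁ - y⟫ + M / 2 * ‖x₁ - y‖ ^ 2 + δ / 2) :
    (1 + α) * f x₁ ≤ f x + α * (f xs - μ * bregman φ xs y - ⟪gradient f y, xs - v₁⟫)
      + (1 + α) * (M / 2 * ‖x₁ - y‖ ^ 2 + δ / 2) := by
  have hP : 0 < 1 + α := by linarith
  have hsplit : (1 + α) * ⟪gradient f y, x₁ - y⟫ = ⟪gradient f y, x - y⟫
      + α * ⟪gradient f y, xs - y⟫ - α * ⟪gradient f y, xs - v₁⟫ := by
    have h : (1 + α) • (x₁ - y) = (x - y) + α • (xs - y) - α • (xs - v₁) := by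
      rw [hx₁, smul_sub, smul_smul, mul_inv_cancel₀ hP.ne', one_smul]
      module
    rw [← real_inner_smul_right, h, inner_sub_right, inner_add_right, real_inner_smul_right,
      real_inner_smul_right]
  have hconv_x := hconv x hx y hy
  have hconv_xs := mul_le_mul_of_nonneg_left (hconv xs hxs y hy) hα
  have hD := mul_nonneg hμ (bregman_nonneg hφsc hx hy)
  have hdescent' := mul_le_mul_of_nonneg_left hdescent hP.le
  linarith

theorem one_add_mul_le_of_subgradient {g : EuclideanSpace ℝ (Fin n) → ℝ} (hg : ConvexOn ℝ Q g)
    {α : ℝ} {x xs v₁ ζ : EuclideanSpace ℝ (Fin n)}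
    (hζ : ∀ v ∈ Q, g v ≥ g v₁ + ⟪ζ, v - v₁⟫) (hx : x ∈ Q) (hxs : xs ∈ Q) (hv₁ : v₁ ∈ Q)
    (hα : 0 ≤ α) :
    (1 + α) * g ((1 + α)⁻¹ • (x + α • v₁)) ≤ g x + α * (g xs - ⟪ζ, xs - v₁⟫) := by
  have h := mul_le_mul_of_nonneg_left (hζ xs hxs) hα
  linarith [hg.one_add_mul_le hx hv₁ hα]

theorem quadratic_terms_le_bregman
    (hφsc : ∀ x ∈ Q, ∀ y ∈ Q, bregman φ x y ≥ 1 / 2 * ‖x - y‖ ^ 2)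
    {F : Type*} [NormedAddCommGroup F] [InnerProductSpace ℝ F]
    (A : EuclideanSpace ℝ (Fin n) →L[ℝ] F) (b : F)
    {α β γ M : ℝ} (hα : 0 ≤ α) (hβ : 0 < β) (hγ : 0 ≤ γ) (hM : 0 ≤ M)
    (hstep : α ^ 2 * (β * M + ‖A‖ ^ 2) = γ * β)
    {x v v₁ y x₁ : EuclideanSpace ℝ (Fin n)} (hv : v ∈ Q) (hv₁ : v₁ ∈ Q)
    (hy : y = (1 + α)⁻¹ • (x + α • v)) (hx₁ : x₁ = (1 + α)⁻¹ • (x + α • v₁)) :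
    (1 + α) * (M / 2 * ‖x₁ - y‖ ^ 2)
      + α ^ 2 / (2 * β) * (‖A v₁ - b‖ ^ 2 - 2 * ⟪A v - b, A v₁ - b⟫) ≤ γ * bregman φ v₁ v := by
  have hdiff : x₁ - y = (α / (1 + α)) • (v₁ - v) := by
    rw [hx₁, hy]
    module
  have hres := norm_sq_sub_two_inner_le (A v - b) (A v₁ - b)
  rw [sub_sub_sub_cancel_right, ← map_sub] at hres
  have hD := mul_le_mul_of_nonneg_left (hφsc v₁ hv₁ v hv) hγ
  have hquad := one_add_mul_sq_add_sq_map_le A (v₁ - v) hα hβ hM hstep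
  rw [hdiff]
  linarith [mul_le_mul_of_nonneg_left hres (by positivity : 0 ≤ α ^ 2 / (2 * β))]

end Bregman

theorem uapd_one_step_estimate_general {n m : ℕ}
    (Q : Set (EuclideanSpace ℝ (Fin n))) (hQconv : Convex ℝ Q)
    (φ h g : EuclideanSpace ℝ (Fin n) → ℝ)
    (hφsc : ∀ x ∈ Q, ∀ y ∈ Q, bregman φ x y ≥ 1 / 2 * ‖x - y‖ ^ 2)
    (μ : ℝ) (hμ : 0 ≤ μ)
    (hhconv : ∀ x ∈ Q, ∀ y ∈ Q,
      h x ≥ h y + ⟪gradient h y, x - y⟫ + μ * bregman φ x y)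
    (hgconv : ConvexOn ℝ Q g)
    (A : EuclideanSpace ℝ (Fin n) →L[ℝ] EuclideanSpace ℝ (Fin m))
    (b : EuclideanSpace ℝ (Fin m))
    -- saddle point data
    (xs : EuclideanSpace ℝ (Fin n)) (hxsQ : xs ∈ Q) (hxsfeas : A xs = b)
    (ls : EuclideanSpace ℝ (Fin m))
    -- current iterates and parameters
    (xk vk : EuclideanSpace ℝ (Fin n)) (hxkQ : xk ∈ Q) (hvkQ : vk ∈ Q)
    (lk : EuclideanSpace ℝ (Fin m))
    (αk βk γk Mk1 δk1 : ℝ)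
    (hαk : 0 < αk) (hβk : 0 < βk) (hγk : 0 < γk) (hMk1 : 0 < Mk1)
    -- the intermediate points
    (yk : EuclideanSpace ℝ (Fin n))
    (hyk : yk = ((1 + αk)⁻¹ : ℝ) • (xk + αk • vk))
    (lhat : EuclideanSpace ℝ (Fin m))
    (hlhat : lhat = lk + (αk / βk) • (A vk - b))
    -- the primal update `v_{k+1}` with subgradient `ζ_{k+1}`
    (vk1 : EuclideanSpace ℝ (Fin n)) (hvk1Q : vk1 ∈ Q)
    (ζ : EuclideanSpace ℝ (Fin n))
    (hζ : ∀ v ∈ Q, g v ≥ g vk1 + ⟪ζ, v - vk1⟫)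
    (hveq : γk • (gradient φ vk1 - gradient φ vk)
      = αk • (μ • (gradient φ yk - gradient φ vk1)
          - (gradient h yk + ζ + (ContinuousLinearMap.adjoint A) lhat)))
    -- remaining updates
    (xk1 : EuclideanSpace ℝ (Fin n))
    (hxk1 : xk1 = ((1 + αk)⁻¹ : ℝ) • (xk + αk • vk1))
    (lk1 : EuclideanSpace ℝ (Fin m))
    (hlk1 : lk1 = lk + (αk / βk) • (A vk1 - b))
    (γk1 βk1 : ℝ)
    (hγk1 : γk1 = (γk + μ * αk) / (1 + αk))
    (hβk1 : βk1 = βk / (1 + αk))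
    -- descent estimate produced by the line search
    (hdescent : h xk1 ≤ h yk + ⟪gradient h yk, xk1 - yk⟫
      + Mk1 / 2 * ‖xk1 - yk‖ ^ 2 + δk1 / 2)
    -- step-size relation
    (hstep : αk ^ 2 * (βk * Mk1 + ‖A‖ ^ 2) = γk * βk)
    -- Lyapunov function values
    (Ek Ek1 : ℝ)
    (hEk : Ek = (h xk + g xk + ⟪ls, A xk - b⟫) - (h xs + g xs + ⟪lk, A xs - b⟫)
      + γk * bregman φ xs vk + βk / 2 * ‖lk - ls‖ ^ 2)
    (hEk1 : Ek1 = (h xk1 + g xk1 + ⟪ls, A xk1 - b⟫) - (h xs + g xs + ⟪lk1, A xs - b⟫)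
      + γk1 * bregman φ xs vk1 + βk1 / 2 * ‖lk1 - ls‖ ^ 2) :
    Ek1 - Ek ≤ -αk * Ek1 + δk1 / 2 * (1 + αk) := by
  have hP : 0 < 1 + αk := by linarith
  have hykQ : yk ∈ Q := hyk ▸ hQconv.inv_one_add_smul_add_mem hxkQ hvkQ hαk.le
  have hh := one_add_mul_le_of_descent hhconv hφsc hμ hxkQ hxsQ hykQ hαk.le hxk1 hdescent
  have hg := one_add_mul_le_of_subgradient hgconv hζ hxkQ hxsQ hvk1Q hαk.le
  have hres := one_add_mul_inner_map_sub A b ls xk vk1 hP.ne'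
  rw [← hxk1] at hg hres
  have hopt := inner_eq_of_mirror_step hveq xs
  rw [inner_add_left, inner_add_left, inner_adjoint_sub_of_map_eq A hxsfeas] at hopt
  have hdual := half_mul_norm_sq_dual_update hβk.ne' ls (A vk - b) (A vk1 - b) hlk1 hlhat
  rw [inner_sub_left] at hdual
  have hquad := quadratic_terms_le_bregman hφsc A b hαk.le hβk hγk.le hMk1.le hstep hvkQ hvk1Q
    hyk hxk1
  have hDy := mul_nonneg (mul_nonneg hαk.le hμ) (bregman_nonneg hφsc hvk1Q hykQ)
  simp only [hxsfeas, sub_self, inner_zero_right, add_zero] at hEk hEk1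
  have hE1 : (1 + αk) * Ek1 = (1 + αk) * (h xk1 + g xk1 + ⟪ls, A xk1 - b⟫ - (h xs + g xs))
      + (γk + μ * αk) * bregman φ xs vk1 + βk / 2 * ‖lk1 - ls‖ ^ 2 := by
    rw [hEk1, hγk1, hβk1]
    field_simp
  linarith

/-- One-step estimate (Lemma 3.4) for the universal accelerated primal-dual method:
`E_{k+1} - E_k ≤ -α_k E_{k+1} + (δ_{k+1}/2)(1+α_k)`. -/
theorem uapd_one_step_estimate {n m : ℕ}
    (Q : Set (EuclideanSpace ℝ (Fin n))) (hQne : Q.Nonempty)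
    (hQclosed : IsClosed Q) (hQconv : Convex ℝ Q)
    (φ h g : EuclideanSpace ℝ (Fin n) → ℝ)
    (hφdiff : Differentiable ℝ φ) (hhdiff : Differentiable ℝ h)
    (hφsc : ∀ x ∈ Q, ∀ y ∈ Q, bregman φ x y ≥ 1 / 2 * ‖x - y‖ ^ 2)
    (μ : ℝ) (hμ : 0 ≤ μ)
    (hhconv : ∀ x ∈ Q, ∀ y ∈ Q,
      h x ≥ h y + ⟪gradient h y, x - y⟫ + μ * bregman φ x y)
    (hgconv : ConvexOn ℝ Q g)
    (A : EuclideanSpace ℝ (Fin n) →L[ℝ] EuclideanSpace ℝ (Fin m))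
    (b : EuclideanSpace ℝ (Fin m))
    -- saddle point data
    (xs : EuclideanSpace ℝ (Fin n)) (hxsQ : xs ∈ Q) (hxsfeas : A xs = b)
    (ls : EuclideanSpace ℝ (Fin m))
    (hsaddle : ∀ x ∈ Q, h x + g x + ⟪ls, A x - b⟫ ≥ h xs + g xs)
    -- current iterates and parameters
    (xk vk : EuclideanSpace ℝ (Fin n)) (hxkQ : xk ∈ Q) (hvkQ : vk ∈ Q)
    (lk : EuclideanSpace ℝ (Fin m))
    (αk βk γk Mk1 δk1 : ℝ)
    (hαk : 0 < αk) (hβk : 0 < βk) (hγk : 0 < γk) (hMk1 : 0 < Mk1) (hδk1 : 0 ≤ δk1)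
    -- the intermediate points
    (yk : EuclideanSpace ℝ (Fin n))
    (hyk : yk = ((1 + αk)⁻¹ : ℝ) • (xk + αk • vk))
    (lhat : EuclideanSpace ℝ (Fin m))
    (hlhat : lhat = lk + (αk / βk) • (A vk - b))
    -- the primal update `v_{k+1}` with subgradient `ζ_{k+1}`
    (vk1 : EuclideanSpace ℝ (Fin n)) (hvk1Q : vk1 ∈ Q)
    (ζ : EuclideanSpace ℝ (Fin n))
    (hζ : ∀ v ∈ Q, g v ≥ g vk1 + ⟪ζ, v - vk1⟫)
    (hveq : γk • (gradient φ vk1 - gradient φ vk)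
      = αk • (μ • (gradient φ yk - gradient φ vk1)
          - (gradient h yk + ζ + (ContinuousLinearMap.adjoint A) lhat)))
    -- remaining updates
    (xk1 : EuclideanSpace ℝ (Fin n))
    (hxk1 : xk1 = ((1 + αk)⁻¹ : ℝ) • (xk + αk • vk1))
    (lk1 : EuclideanSpace ℝ (Fin m))
    (hlk1 : lk1 = lk + (αk / βk) • (A vk1 - b))
    (γk1 βk1 : ℝ)
    (hγk1 : γk1 = (γk + μ * αk) / (1 + αk))
    (hβk1 : βk1 = βk / (1 + αk))
    -- descent estimate produced by the line search
    (hdescent : h xk1 ≤ h yk + ⟪gradient h yk, xk1 - yk⟫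
      + Mk1 / 2 * ‖xk1 - yk‖ ^ 2 + δk1 / 2)
    -- step-size relation
    (hstep : αk ^ 2 * (βk * Mk1 + ‖A‖ ^ 2) = γk * βk)
    -- Lyapunov function values
    (Ek Ek1 : ℝ)
    (hEk : Ek = (h xk + g xk + ⟪ls, A xk - b⟫) - (h xs + g xs + ⟪lk, A xs - b⟫)
      + γk * bregman φ xs vk + βk / 2 * ‖lk - ls‖ ^ 2)
    (hEk1 : Ek1 = (h xk1 + g xk1 + ⟪ls, A xk1 - b⟫) - (h xs + g xs + ⟪lk1, A xs - b⟫)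
      + γk1 * bregman φ xs vk1 + βk1 / 2 * ‖lk1 - ls‖ ^ 2) :
    Ek1 - Ek ≤ -αk * Ek1 + δk1 / 2 * (1 + αk) :=
  uapd_one_step_estimate_general Q hQconv φ h g hφsc μ hμ hhconv hgconv A b xs hxsQ hxsfeas ls xk vk
    hxkQ hvkQ lk αk βk γk Mk1 δk1 hαk hβk hγk hMk1 yk hyk lhat hlhat vk1 hvk1Q ζ hζ hveq xk1 hxk1
    lk1 hlk1 γk1 βk1 hγk1 hβk1 hdescent hstep Ek Ek1 hEk hEk1
end

section
/- Let θ > 1, R > 0, η = θ − 1. Let σ : [0,∞) → ℝ be nonnegative and locally integrable, and set Σ(t) := ∫₀^t σ(s) ds. Let φ : [0,∞) → ℝ be positive, nondecreasing and continuously differentiable. Let y : [0,∞) → ℝ be differentiable with y(t) > 0 for all t ≥ 0, y(0) = 1, and y'(t) ≤ −σ(t)·y(t)^θ / √(φ(t)·y(t)^{2η} + R²) for all t ≥ 0. Then for all t > 0: y(t) ≤ exp(−Σ(t)/(2√(φ(t)))) + (1 + (θ−1)Σ(t)/(2R))^{−1/(θ−1)}. -/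
/-!
Fix `t > 0` and put `a = √φ(t)`, `η = θ - 1`. Along the trajectory, the potential
`P(u) = -a log u + (R/η)(u^{-η} - 1)` satisfies `(P ∘ y)' ≥ σ` on `(0, t)`: since `φ` is
nondecreasing, `√(φ y^{2η} + R²) ≤ a y^η + R`, and `-P'(u) u^θ = a u^η + R`. Integrating,
`Σ(t) ≤ P(y(t))`, so one of the two summands of `P(y(t))` is at least `Σ(t)/2`; the first
gives the exponential bound and the second the algebraic one.
-/

open MeasureTheory Real Set

namespace DecayEstimate

noncomputable def potential (a R η u : ℝ) : ℝ :=
  -a * log u + R / η * (u ^ (-η) - 1)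

variable {a R η u S : ℝ}

lemma potential_one : potential a R η 1 = 0 := by
  simp [potential]

lemma hasDerivAt_potential (hη : η ≠ 0) (hu : 0 < u) :
    HasDerivAt (potential a R η) (-(a / u + R * u ^ (-η - 1))) u := by
  have hlog := (hasDerivAt_log hu.ne').const_mul (-a)
  have hpow := ((hasDerivAt_rpow_const (p := -η) (Or.inl hu.ne')).sub_const 1).const_mul (R / η)
  refine (hlog.add hpow).congr_deriv ?_
  field_simp
  ring

lemma rpow_add_one_mul_neg_deriv_potential (hu : 0 < u) :
    u ^ (η + 1) * (a / u + R * u ^ (-η - 1)) = a * u ^ η + R := by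
  have hdiv : u ^ (η + 1) / u = u ^ η := by
    rw [rpow_add_one hu.ne', mul_div_cancel_right₀ _ hu.ne']
  have hinv : u ^ (η + 1) * u ^ (-η - 1) = 1 := by
    rw [← rpow_add hu, show η + 1 + (-η - 1) = 0 by ring, rpow_zero]
  calc u ^ (η + 1) * (a / u + R * u ^ (-η - 1))
      = a * (u ^ (η + 1) / u) + R * (u ^ (η + 1) * u ^ (-η - 1)) := by ring
    _ = a * u ^ η + R := by rw [hdiv, hinv, mul_one]

lemma sqrt_mul_rpow_add_sq_le {c : ℝ} (hca : c ≤ a ^ 2) (ha : 0 ≤ a)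
    (hR : 0 ≤ R) (hu : 0 ≤ u) :
    √(c * u ^ (2 * η) + R ^ 2) ≤ a * u ^ η + R := by
  have hsq : u ^ (2 * η) = (u ^ η) ^ 2 := by
    rw [mul_comm, rpow_mul hu, rpow_two]
  have huη : 0 ≤ u ^ η := rpow_nonneg hu η
  rw [sqrt_le_left (by positivity), hsq]
  nlinarith [mul_le_mul_of_nonneg_right hca (sq_nonneg (u ^ η)), mul_nonneg ha huη]

lemma le_neg_deriv_potential_mul {c σ v : ℝ} (hσ : 0 ≤ σ) (hc : 0 ≤ c) (hca : c ≤ a ^ 2)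
    (ha : 0 ≤ a) (hR : 0 < R) (hu : 0 < u)
    (hv : v ≤ -(σ * u ^ (η + 1)) / √(c * u ^ (2 * η) + R ^ 2)) :
    σ ≤ -(a / u + R * u ^ (-η - 1)) * v := by
  set D := √(c * u ^ (2 * η) + R ^ 2)
  have hD : 0 < D := sqrt_pos.mpr (by positivity)
  have hslope : 0 ≤ a / u + R * u ^ (-η - 1) := by positivity
  have hv' : σ * u ^ (η + 1) ≤ -v * D := by
    rw [neg_div, le_neg, div_le_iff₀ hD] at hv
    linarith
  calc σ = σ * D / D := by field_simp
    _ ≤ σ * (a * u ^ η + R) / D := by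
        gcongr
        exact sqrt_mul_rpow_add_sq_le hca ha hR.le hu.le
    _ = σ * u ^ (η + 1) / D * (a / u + R * u ^ (-η - 1)) := by
        rw [div_mul_eq_mul_div, mul_assoc, rpow_add_one_mul_neg_deriv_potential hu]
    _ ≤ -v * D / D * (a / u + R * u ^ (-η - 1)) := by gcongr
    _ = -(a / u + R * u ^ (-η - 1)) * v := by field_simp

lemma integral_le_potential_comp_sub {σ y y' : ℝ → ℝ} {t : ℝ} (hη : η ≠ 0) (ht : 0 ≤ t)
    (hy : ∀ s ≥ (0 : ℝ), HasDerivWithinAt y (y' s) (Ici 0) s)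
    (hypos : ∀ s ≥ (0 : ℝ), 0 < y s) (hσ : IntegrableOn σ (Icc 0 t))
    (hσle : ∀ s ∈ Ioo 0 t, σ s ≤ -(a / y s + R * y s ^ (-η - 1)) * y' s) :
    ∫ s in (0 : ℝ)..t, σ s ≤ potential a R η (y t) - potential a R η (y 0) := by
  have hP : ∀ s ≥ (0 : ℝ),
      HasDerivAt (potential a R η) (-(a / y s + R * y s ^ (-η - 1))) (y s) :=
    fun s hs ↦ hasDerivAt_potential hη (hypos s hs)
  refine intervalIntegral.integral_le_sub_of_hasDeriv_right_of_le
    (g := fun s ↦ potential a R η (y s)) ht ?_ ?_ hσ hσle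
  · intro s hs
    exact (hP s hs.1).continuousAt.comp_continuousWithinAt
      ((hy s hs.1).continuousWithinAt.mono fun r hr ↦ hr.1)
  · intro s hs
    exact (hP s hs.1.le).comp_hasDerivWithinAt s
      ((hy s hs.1.le).mono fun r hr ↦ hs.1.le.trans (le_of_lt hr))

lemma le_exp_of_half_le_neg_mul_log (ha : 0 < a) (hu : 0 < u) (h : S / 2 ≤ -a * log u) :
    u ≤ exp (-S / (2 * a)) := by
  rw [← exp_log hu, exp_le_exp, le_div_iff₀ (by positivity)]
  linarith

lemma le_rpow_of_half_le_mul_rpow_sub_one (hR : 0 < R) (hη : 0 < η) (hS : 0 ≤ S)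
    (hu : 0 < u) (h : S / 2 ≤ R / η * (u ^ (-η) - 1)) :
    u ≤ (1 + η * S / (2 * R)) ^ (-(1 / η)) := by
  have hbase : 1 + η * S / (2 * R) ≤ u ^ (-η) := by
    have h' : η * S / (2 * R) ≤ u ^ (-η) - 1 := by
      rw [div_le_iff₀ (by positivity)]
      rw [div_mul_eq_mul_div, le_div_iff₀ hη] at h
      linarith
    linarith
  calc u = (u ^ (-η)) ^ (-(1 / η)) := by
        rw [← rpow_mul hu.le, show -η * -(1 / η) = 1 by field_simp, rpow_one]
    _ ≤ (1 + η * S / (2 * R)) ^ (-(1 / η)) :=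
        rpow_le_rpow_of_nonpos (by positivity) hbase (by simp only [neg_nonpos]; positivity)

lemma le_exp_add_rpow_of_le_potential (ha : 0 < a) (hR : 0 < R) (hη : 0 < η) (hS : 0 ≤ S)
    (hu : 0 < u) (h : S ≤ potential a R η u) :
    u ≤ exp (-S / (2 * a)) + (1 + η * S / (2 * R)) ^ (-(1 / η)) := by
  have hexp := (exp_pos (-S / (2 * a))).le
  have hrpow : 0 ≤ (1 + η * S / (2 * R)) ^ (-(1 / η)) := rpow_nonneg (by positivity) _
  unfold potential at h
  rcases le_or_gt (S / 2) (-a * log u) with hlog | hlog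
  · linarith [le_exp_of_half_le_neg_mul_log ha hu hlog]
  · linarith [le_rpow_of_half_le_mul_rpow_sub_one hR hη hS hu (by linarith)]

end DecayEstimate

open DecayEstimate

theorem decay_estimate_critical_general (θ R : ℝ) (hθ : 1 < θ) (hR : 0 < R)
    (σ : ℝ → ℝ) (hσnonneg : ∀ t ≥ (0 : ℝ), 0 ≤ σ t)
    (hσint : ∀ t : ℝ, IntervalIntegrable σ volume 0 t)
    (φ : ℝ → ℝ) (hφpos : ∀ t ≥ (0 : ℝ), 0 < φ t)
    (hφmono : MonotoneOn φ (Set.Ici 0))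
    (y y' : ℝ → ℝ)
    (hyderiv : ∀ t ≥ (0 : ℝ), HasDerivWithinAt y (y' t) (Set.Ici 0) t)
    (hypos : ∀ t ≥ (0 : ℝ), 0 < y t) (hy0 : y 0 = 1)
    (hyineq : ∀ t ≥ (0 : ℝ), y' t ≤
      -(σ t * y t ^ θ) / Real.sqrt (φ t * y t ^ (2 * (θ - 1)) + R ^ 2)) :
    ∀ t > (0 : ℝ),
      y t ≤ Real.exp (-(∫ s in (0 : ℝ)..t, σ s) / (2 * Real.sqrt (φ t)))
        + (1 + (θ - 1) * (∫ s in (0 : ℝ)..t, σ s) / (2 * R)) ^ (-(1 / (θ - 1))) := by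
  intro t ht
  have hη : 0 < θ - 1 := by linarith
  have hφt := hφpos t ht.le
  have hσle : ∀ s ∈ Ioo 0 t,
      σ s ≤ -(√(φ t) / y s + R * y s ^ (-(θ - 1) - 1)) * y' s := by
    intro s hs
    refine le_neg_deriv_potential_mul (hσnonneg s hs.1.le) (hφpos s hs.1.le).le ?_
      (sqrt_nonneg _) hR (hypos s hs.1.le) ?_
    · rw [sq_sqrt hφt.le]
      exact hφmono hs.1.le ht.le hs.2.le
    · simpa only [sub_add_cancel] using hyineq s hs.1.le
  have hintegral_le := integral_le_potential_comp_sub hη.ne' ht.le hyderiv hypos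
    (Iff.mpr integrableOn_Icc_iff_integrableOn_Ioc (hσint t).1) hσle
  rw [hy0, potential_one, sub_zero] at hintegral_le
  have hintegral_nonneg : 0 ≤ ∫ s in (0 : ℝ)..t, σ s :=
    intervalIntegral.integral_nonneg ht.le fun s hs ↦ hσnonneg s hs.1
  exact le_exp_add_rpow_of_le_potential (sqrt_pos.mpr hφt) hR hη hintegral_nonneg
    (hypos t ht.le) hintegral_le

/-- Decay estimate for the differential inequality
`y' ≤ -σ y^θ / √(φ y^{2η} + R²)` in the critical case `η = θ - 1`. -/
theorem decay_estimate_critical (θ R : ℝ) (hθ : 1 < θ) (hR : 0 < R)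
    (σ : ℝ → ℝ) (hσnonneg : ∀ t ≥ (0 : ℝ), 0 ≤ σ t)
    (hσint : ∀ t : ℝ, IntervalIntegrable σ volume 0 t)
    (φ : ℝ → ℝ) (hφpos : ∀ t ≥ (0 : ℝ), 0 < φ t)
    (hφmono : MonotoneOn φ (Set.Ici 0))
    (hφC1 : ContDiffOn ℝ 1 φ (Set.Ici 0))
    (y y' : ℝ → ℝ)
    (hyderiv : ∀ t ≥ (0 : ℝ), HasDerivWithinAt y (y' t) (Set.Ici 0) t)
    (hypos : ∀ t ≥ (0 : ℝ), 0 < y t) (hy0 : y 0 = 1)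
    (hyineq : ∀ t ≥ (0 : ℝ), y' t ≤
      -(σ t * y t ^ θ) / Real.sqrt (φ t * y t ^ (2 * (θ - 1)) + R ^ 2)) :
    ∀ t > (0 : ℝ),
      y t ≤ Real.exp (-(∫ s in (0 : ℝ)..t, σ s) / (2 * Real.sqrt (φ t)))
        + (1 + (θ - 1) * (∫ s in (0 : ℝ)..t, σ s) / (2 * R)) ^ (-(1 / (θ - 1))) :=
  decay_estimate_critical_general θ R hθ hR σ hσnonneg hσint φ hφpos hφmono y y' hyderiv hypos hy0
    hyineq
end

section
/- Let θ > 1, R > 0, and 0 ≤ η < θ − 1. Let σ : [0,∞) → ℝ be nonnegative and locally integrable, and set Σ(t) := ∫₀^t σ(s) ds. Let φ : [0,∞) → ℝ be positive, nondecreasing and continuously differentiable. Let y : [0,∞) → ℝ be differentiable with y(t) > 0 for all t ≥ 0, y(0) = 1, and y'(t) ≤ −σ(t)·y(t)^θ / √(φ(t)·y(t)^{2η} + R²) for all t ≥ 0. Then for all t > 0: y(t) ≤ (1 + (θ−1)Σ(t)/(2R))^{−1/(θ−1)} + (1 + (θ−η−1)Σ(t)/(2√(φ(t))))^{−1/(θ−η−1)}.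 -/
/-!
Fix `t > 0` and put `P = √(φ t)`. Since `φ ≤ φ t` on `[0, t]`, there
`√(φ y^{2η} + R²) ≤ P y^η + R`, so `σ ≤ -(P y^{η-θ} + R y^{-θ}) y'`. The right-hand side
is the derivative of `Φ ∘ y` for the decreasing potential `Φ v = P F_q v + R F_p v`, where
`F_p v = (v^{-p} - 1) / p = ∫ u in v..1, u^{-p-1}`, `p = θ - 1`, `q = θ - η - 1`;
integrating gives `Σ(t) ≤ Φ (y t)`. The two terms `a, b` of the claimed bound are chosen so
that `R F_p a = P F_q b = Σ(t) / 2`, hence `Φ (a + b) ≤ Σ(t) ≤ Φ (y t)` and `y t ≤ a + b`.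
-/

open MeasureTheory Set Real

noncomputable def rpowPotential (p v : ℝ) : ℝ := (v ^ (-p) - 1) / p

namespace rpowPotential

@[simp]
lemma one (p : ℝ) : rpowPotential p 1 = 0 := by simp [rpowPotential]

lemma hasDerivAt {p v : ℝ} (hp : p ≠ 0) (hv : 0 < v) :
    HasDerivAt (rpowPotential p) (-v ^ (-p - 1)) v := by
  have h := ((hasDerivAt_rpow_const (p := -p) (Or.inl hv.ne')).sub_const 1).div_const p
  rwa [neg_mul, neg_div, mul_div_cancel_left₀ _ hp] at h

lemma strictAntiOn {p : ℝ} (hp : 0 < p) : StrictAntiOn (rpowPotential p) (Ioi 0) :=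
  fun _ hu _ _ huv => div_lt_div_of_pos_right
    (sub_lt_sub_right (rpow_lt_rpow_of_neg hu huv (neg_neg_of_pos hp)) 1) hp

lemma apply_one_add_mul_rpow {p s : ℝ} (hp : p ≠ 0) (hs : 0 < 1 + p * s) :
    rpowPotential p ((1 + p * s) ^ (-(1 / p))) = s := by
  rw [rpowPotential, ← rpow_mul hs.le, show -(1 / p) * -p = 1 by field_simp, rpow_one]
  field_simp
  ring

lemma hasDerivAt_mul_add_mul {θ η P R v : ℝ} (hθ : θ - 1 ≠ 0) (hη : θ - η - 1 ≠ 0)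
    (hv : 0 < v) :
    HasDerivAt (fun u => P * rpowPotential (θ - η - 1) u + R * rpowPotential (θ - 1) u)
      (-(P * v ^ (η - θ) + R * v ^ (-θ))) v := by
  have h := ((hasDerivAt hη hv).const_mul P).add ((hasDerivAt hθ hv).const_mul R)
  rw [show -(θ - η - 1) - 1 = η - θ by ring, show -(θ - 1) - 1 = -θ by ring] at h
  exact h.congr_deriv (by ring)

end rpowPotential

lemma le_rpow_add_rpow_of_le_potential {p q P R s v : ℝ} (hp : 0 < p) (hq : 0 < q)
    (hP : 0 < P) (hR : 0 < R) (hs : 0 ≤ s) (hv : 0 < v)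
    (h : s ≤ P * rpowPotential q v + R * rpowPotential p v) :
    v ≤ (1 + p * s / (2 * R)) ^ (-(1 / p)) + (1 + q * s / (2 * P)) ^ (-(1 / q)) := by
  rw [mul_div_assoc, mul_div_assoc]
  set a := (1 + p * (s / (2 * R))) ^ (-(1 / p))
  set b := (1 + q * (s / (2 * P))) ^ (-(1 / q))
  have ha : 0 < a := by positivity
  have hb : 0 < b := by positivity
  have hFa : rpowPotential p a = s / (2 * R) :=
    rpowPotential.apply_one_add_mul_rpow hp.ne' (by positivity)
  have hFb : rpowPotential q b = s / (2 * P) :=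
    rpowPotential.apply_one_add_mul_rpow hq.ne' (by positivity)
  by_contra! hlt
  have hab : 0 < a + b := by positivity
  have hFqv := rpowPotential.strictAntiOn hq hab hv hlt
  have hFpv := rpowPotential.strictAntiOn hp hab hv hlt
  have hFqb := (rpowPotential.strictAntiOn hq).antitoneOn hb hab (by linarith)
  have hFpa := (rpowPotential.strictAntiOn hp).antitoneOn ha hab (by linarith)
  have : s < s := calc
    s ≤ P * rpowPotential q v + R * rpowPotential p v := h
    _ < P * rpowPotential q b + R * rpowPotential p a := by gcongr <;> linarith
    _ = s := by rw [hFa, hFb]; field_simp; ring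
  exact lt_irrefl s this

lemma integral_le_sub_comp_of_le_mul_deriv {G G' y y' σ : ℝ → ℝ} {a b : ℝ} (hab : a ≤ b)
    (hy : ∀ x ∈ Icc a b, HasDerivWithinAt y (y' x) (Icc a b) x)
    (hG : ∀ x ∈ Icc a b, HasDerivAt G (G' (y x)) (y x)) (hσ : IntegrableOn σ (Icc a b))
    (hle : ∀ x ∈ Ioo a b, σ x ≤ G' (y x) * y' x) :
    ∫ x in a..b, σ x ≤ G (y b) - G (y a) :=
  intervalIntegral.integral_le_sub_of_hasDeriv_right_of_le hab
    (fun x hx => (hG x hx).continuousAt.comp_continuousWithinAt (hy x hx).continuousWithinAt)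
    (fun x hx => (hG x (Ioo_subset_Icc_self hx)).comp_hasDerivWithinAt x
      ((hy x (Ioo_subset_Icc_self hx)).hasDerivAt (Icc_mem_nhds hx.1 hx.2)).hasDerivWithinAt)
    hσ hle

lemma sqrt_mul_add_sq_le {c A P R : ℝ} (hc : c ≤ P ^ 2) (hP : 0 ≤ P) (hA : 0 ≤ A)
    (hR : 0 ≤ R) : √(c * A ^ 2 + R ^ 2) ≤ P * A + R :=
  Real.sqrt_le_iff.2 ⟨by positivity, by nlinarith [mul_nonneg (mul_nonneg hP hA) hR]⟩

lemma le_neg_mul_of_le_neg_div_sqrt {θ η c P R s u d : ℝ} (hc₀ : 0 ≤ c) (hc : c ≤ P ^ 2)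
    (hP : 0 ≤ P) (hR : 0 < R) (hs : 0 ≤ s) (hu : 0 < u)
    (hd : d ≤ -(s * u ^ θ) / √(c * u ^ (2 * η) + R ^ 2)) :
    s ≤ -(P * u ^ (η - θ) + R * u ^ (-θ)) * d := by
  have hD : 0 < P * u ^ η + R := by positivity
  have hsqrt : √(c * u ^ (2 * η) + R ^ 2) ≤ P * u ^ η + R := by
    rw [mul_comm 2 η, rpow_mul hu.le, rpow_two]
    exact sqrt_mul_add_sq_le hc hP (by positivity) hR.le
  have hdD : d * (P * u ^ η + R) ≤ -(s * u ^ θ) := by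
    rw [← le_div_iff₀ hD]
    refine hd.trans ?_
    rw [neg_div, neg_div, neg_le_neg_iff]
    exact div_le_div_of_nonneg_left (by positivity) (by positivity) hsqrt
  have hcoef : P * u ^ (η - θ) + R * u ^ (-θ) = (P * u ^ η + R) / u ^ θ := by
    rw [rpow_sub hu, rpow_neg hu.le]
    ring
  rw [hcoef]
  calc s = s * u ^ θ / u ^ θ := by field_simp
    _ ≤ -(d * (P * u ^ η + R)) / u ^ θ := by gcongr; linarith
    _ = _ := by ring

theorem decay_estimate_subcritical_general (θ R η : ℝ) (hθ : 1 < θ) (hR : 0 < R)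
    (hη : η < θ - 1)
    (σ : ℝ → ℝ) (hσnonneg : ∀ t ≥ (0 : ℝ), 0 ≤ σ t)
    (hσint : ∀ t : ℝ, IntervalIntegrable σ volume 0 t)
    (φ : ℝ → ℝ) (hφpos : ∀ t ≥ (0 : ℝ), 0 < φ t)
    (hφmono : MonotoneOn φ (Set.Ici 0))
    (y y' : ℝ → ℝ)
    (hyderiv : ∀ t ≥ (0 : ℝ), HasDerivWithinAt y (y' t) (Set.Ici 0) t)
    (hypos : ∀ t ≥ (0 : ℝ), 0 < y t) (hy0 : y 0 = 1)
    (hyineq : ∀ t ≥ (0 : ℝ), y' t ≤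
      -(σ t * y t ^ θ) / Real.sqrt (φ t * y t ^ (2 * η) + R ^ 2)) :
    ∀ t > (0 : ℝ),
      y t ≤ (1 + (θ - 1) * (∫ s in (0 : ℝ)..t, σ s) / (2 * R)) ^ (-(1 / (θ - 1)))
        + (1 + (θ - η - 1) * (∫ s in (0 : ℝ)..t, σ s) / (2 * Real.sqrt (φ t)))
            ^ (-(1 / (θ - η - 1))) := by
  intro t ht
  have hφt : 0 < φ t := hφpos t ht.le
  refine le_rpow_add_rpow_of_le_potential (by linarith) (by linarith) (sqrt_pos.2 hφt) hR
    (intervalIntegral.integral_nonneg ht.le fun x hx => hσnonneg x hx.1) (hypos t ht.le) ?_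
  have hrate : ∀ x ∈ Ioo 0 t,
      σ x ≤ -(√(φ t) * y x ^ (η - θ) + R * y x ^ (-θ)) * y' x := fun x hx =>
    le_neg_mul_of_le_neg_div_sqrt (hφpos x hx.1.le).le
      ((hφmono hx.1.le ht.le hx.2.le).trans (sq_sqrt hφt.le).ge) (sqrt_nonneg _) hR
      (hσnonneg x hx.1.le) (hypos x hx.1.le) (hyineq x hx.1.le)
  have h := integral_le_sub_comp_of_le_mul_deriv
    (G' := fun v => -(√(φ t) * v ^ (η - θ) + R * v ^ (-θ))) ht.le
    (fun x hx => (hyderiv x hx.1).mono Icc_subset_Ici_self)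
    (fun x hx => rpowPotential.hasDerivAt_mul_add_mul (by linarith) (by linarith) (hypos x hx.1))
    ((intervalIntegrable_iff_integrableOn_Icc_of_le ht.le).1 (hσint t)) hrate
  simpa [hy0] using h

/-- Decay estimate for the differential inequality
`y' ≤ -σ y^θ / √(φ y^{2η} + R²)` in the subcritical case `0 ≤ η < θ - 1`. -/
theorem decay_estimate_subcritical (θ R η : ℝ) (hθ : 1 < θ) (hR : 0 < R)
    (hη0 : 0 ≤ η) (hη : η < θ - 1)
    (σ : ℝ → ℝ) (hσnonneg : ∀ t ≥ (0 : ℝ), 0 ≤ σ t)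
    (hσint : ∀ t : ℝ, IntervalIntegrable σ volume 0 t)
    (φ : ℝ → ℝ) (hφpos : ∀ t ≥ (0 : ℝ), 0 < φ t)
    (hφmono : MonotoneOn φ (Set.Ici 0))
    (hφC1 : ContDiffOn ℝ 1 φ (Set.Ici 0))
    (y y' : ℝ → ℝ)
    (hyderiv : ∀ t ≥ (0 : ℝ), HasDerivWithinAt y (y' t) (Set.Ici 0) t)
    (hypos : ∀ t ≥ (0 : ℝ), 0 < y t) (hy0 : y 0 = 1)
    (hyineq : ∀ t ≥ (0 : ℝ), y' t ≤
      -(σ t * y t ^ θ) / Real.sqrt (φ t * y t ^ (2 * η) + R ^ 2)) :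
    ∀ t > (0 : ℝ),
      y t ≤ (1 + (θ - 1) * (∫ s in (0 : ℝ)..t, σ s) / (2 * R)) ^ (-(1 / (θ - 1)))
        + (1 + (θ - η - 1) * (∫ s in (0 : ℝ)..t, σ s) / (2 * Real.sqrt (φ t)))
            ^ (-(1 / (θ - η - 1))) :=
  decay_estimate_subcritical_general θ R η hθ hR hη σ hσnonneg hσint φ hφpos hφmono y y' hyderiv
    hypos hy0 hyineq
end

section
/- Let w > 0, R > 0, θ > 1 and S ≥ 0. Define Y₁ := exp(−S/(2√w)) and Y₂ := (1 + (θ−1)S/(2R))^{−1/(θ−1)}. Then √w · ln(1/(Y₁+Y₂)) + (R/(θ−1))·((Y₁+Y₂)^{1−θ} − 1) ≤ S. -/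
/-! Both terms of the left-hand side are nonincreasing in `v = Y₁ + Y₂`. Since `Y₁` alone makes
the logarithmic term equal to `S/2` and `Y₂` alone makes the power term equal to `S/2`, their
sum makes each term at most `S/2`. -/

open Real

lemma mul_log_one_div_le_of_exp_le {c t v : ℝ} (hc : 0 < c) (hv : exp (-t / c) ≤ v) :
    c * log (1 / v) ≤ t := by
  have hv₀ : 0 < v := (exp_pos _).trans_le hv
  have hlog : -t / c ≤ log v := (le_log_iff_exp_le hv₀).2 hv
  calc c * log (1 / v) = c * -log v := by rw [one_div, log_inv]
    _ ≤ c * (t / c) := by gcongr; rw [neg_div] at hlog; linarith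
    _ = t := by field_simp

lemma rpow_neg_le_of_rpow_neg_inv_le {p b v : ℝ} (hp : 0 < p) (hb : 0 < b)
    (hv : b ^ (-(1 / p)) ≤ v) : v ^ (-p) ≤ b :=
  calc v ^ (-p) ≤ (b ^ (-(1 / p))) ^ (-p) :=
        rpow_le_rpow_of_nonpos (rpow_pos_of_pos hb _) hv (by linarith)
    _ = b := by rw [← rpow_mul hb.le, show -(1 / p) * -p = 1 by field_simp, rpow_one]

/-- `Y₁ + Y₂` is a supersolution of the integrated differential inequality in the
critical case: `√w ln(1/(Y₁+Y₂)) + (R/(θ-1))((Y₁+Y₂)^{1-θ} - 1) ≤ S`. -/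
theorem supersolution_critical (w R θ S : ℝ) (hw : 0 < w) (hR : 0 < R)
    (hθ : 1 < θ) (hS : 0 ≤ S) :
    Real.sqrt w * Real.log (1 /
        (Real.exp (-S / (2 * Real.sqrt w))
          + (1 + (θ - 1) * S / (2 * R)) ^ (-(1 / (θ - 1)))))
      + R / (θ - 1) *
        ((Real.exp (-S / (2 * Real.sqrt w))
          + (1 + (θ - 1) * S / (2 * R)) ^ (-(1 / (θ - 1)))) ^ (1 - θ) - 1) ≤ S := by
  set Y₁ := exp (-S / (2 * √w))
  set b := 1 + (θ - 1) * S / (2 * R) with hb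
  set Y₂ := b ^ (-(1 / (θ - 1)))
  have hp : 0 < θ - 1 := by linarith
  have hb₀ : 0 < b := by positivity
  have hY₁ : 0 ≤ Y₁ := (exp_pos _).le
  have hY₂ : 0 ≤ Y₂ := rpow_nonneg hb₀.le _
  have hlog : √w * log (1 / (Y₁ + Y₂)) ≤ S / 2 :=
    mul_log_one_div_le_of_exp_le (sqrt_pos.2 hw)
      (by rw [show -(S / 2) / √w = -S / (2 * √w) by ring]; linarith)
  have hpow : (Y₁ + Y₂) ^ (1 - θ) ≤ b := by
    rw [show 1 - θ = -(θ - 1) by ring]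
    exact rpow_neg_le_of_rpow_neg_inv_le hp hb₀ (by linarith)
  have hpow' : R / (θ - 1) * ((Y₁ + Y₂) ^ (1 - θ) - 1) ≤ S / 2 :=
    calc R / (θ - 1) * ((Y₁ + Y₂) ^ (1 - θ) - 1) ≤ R / (θ - 1) * (b - 1) := by gcongr
      _ = S / 2 := by rw [hb]; field_simp; ring
  linarith
end

section
/- Let w > 0, R > 0, θ > 1, 0 ≤ η < θ − 1 and S ≥ 0. Define G(v) := (√w/(θ−η−1))·(v^{η+1−θ} − 1) + (R/(θ−1))·(v^{1−θ} − 1) for v > 0, and set Y₂ := (1 + (θ−1)S/(2R))^{−1/(θ−1)} and Y₃ := (1 + (θ−η−1)S/(2√w))^{−1/(θ−η−1)}. Then G(Y₂ + Y₃) ≤ S. -/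
/-! Each summand of `G(Y₂ + Y₃)` is at most `S / 2`: `v ↦ v ^ (-c)` is antitone and inverts
`b ↦ b ^ (-(1 / c))`, so `Y₂ + Y₃ ≥ Yᵢ` bounds the `i`-th summand by its value at `Yᵢ`, which is
`S / 2` by the choice of `Yᵢ`. -/

theorem mul_rpow_neg_sub_one_le {a b c v : ℝ} (ha : 0 ≤ a) (hb : 0 < b) (hc : 0 < c)
    (hv : b ^ (-(1 / c)) ≤ v) :
    a / c * (v ^ (-c) - 1) ≤ a / c * (b - 1) := by
  have hinv : (b ^ (-(1 / c))) ^ (-c) = b := by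
    rw [one_div, neg_inv]
    exact Real.rpow_inv_rpow hb.le (neg_ne_zero.mpr hc.ne')
  calc a / c * (v ^ (-c) - 1) ≤ a / c * ((b ^ (-(1 / c))) ^ (-c) - 1) := by
        have hanti := Real.rpow_le_rpow_of_nonpos (Real.rpow_pos_of_pos hb _) hv
          (neg_nonpos.mpr hc.le)
        gcongr
    _ = a / c * (b - 1) := by rw [hinv]

theorem supersolution_subcritical_general (w R θ η S : ℝ) (hw : 0 < w) (hR : 0 < R)
    (hθ : 1 < θ) (hη : η < θ - 1) (hS : 0 ≤ S) :
    Real.sqrt w / (θ - η - 1) *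
        (((1 + (θ - 1) * S / (2 * R)) ^ (-(1 / (θ - 1)))
          + (1 + (θ - η - 1) * S / (2 * Real.sqrt w)) ^ (-(1 / (θ - η - 1))))
            ^ (η + 1 - θ) - 1)
      + R / (θ - 1) *
        (((1 + (θ - 1) * S / (2 * R)) ^ (-(1 / (θ - 1)))
          + (1 + (θ - η - 1) * S / (2 * Real.sqrt w)) ^ (-(1 / (θ - η - 1))))
            ^ (1 - θ) - 1) ≤ S := by
  have hsw : 0 < Real.sqrt w := Real.sqrt_pos.mpr hw
  have hc : 0 < θ - η - 1 := by linarith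
  have hd : 0 < θ - 1 := by linarith
  set B := 1 + (θ - 1) * S / (2 * R)
  set A := 1 + (θ - η - 1) * S / (2 * Real.sqrt w)
  have hB : 0 < B := add_pos_of_pos_of_nonneg one_pos (by positivity)
  have hA : 0 < A := add_pos_of_pos_of_nonneg one_pos (by positivity)
  rw [show η + 1 - θ = -(θ - η - 1) by ring, show 1 - θ = -(θ - 1) by ring]
  calc _ ≤ Real.sqrt w / (θ - η - 1) * (A - 1) + R / (θ - 1) * (B - 1) :=
        add_le_add
          (mul_rpow_neg_sub_one_le hsw.le hA hc (le_add_of_nonneg_left (by positivity)))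
          (mul_rpow_neg_sub_one_le hR.le hB hd (le_add_of_nonneg_right (by positivity)))
    _ = S := by simp only [A, B]; field_simp; ring

/-- `Y₂ + Y₃` is a supersolution of the integrated differential inequality in the
subcritical case: `G(Y₂ + Y₃) ≤ S` where
`G(v) = (√w/(θ-η-1))(v^{η+1-θ} - 1) + (R/(θ-1))(v^{1-θ} - 1)`. -/
theorem supersolution_subcritical (w R θ η S : ℝ) (hw : 0 < w) (hR : 0 < R)
    (hθ : 1 < θ) (hη0 : 0 ≤ η) (hη : η < θ - 1) (hS : 0 ≤ S) :
    Real.sqrt w / (θ - η - 1) *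
        (((1 + (θ - 1) * S / (2 * R)) ^ (-(1 / (θ - 1)))
          + (1 + (θ - η - 1) * S / (2 * Real.sqrt w)) ^ (-(1 / (θ - η - 1))))
            ^ (η + 1 - θ) - 1)
      + R / (θ - 1) *
        (((1 + (θ - 1) * S / (2 * R)) ^ (-(1 / (θ - 1)))
          + (1 + (θ - η - 1) * S / (2 * Real.sqrt w)) ^ (-(1 / (θ - η - 1))))
            ^ (1 - θ) - 1) ≤ S :=
  supersolution_subcritical_general w R θ η S hw hR hθ hη hS
end

section
/- Fix ν ∈ [0,1]. There exists a constant C_ν > 0 depending only on ν with the following property. Let M_ν > 0, R > 0 and γ₀ > 0 with γ₀ ≤ R², and define M(ν,δ) := δ^{(ν−1)/(ν+1)} · M_ν^{2/(ν+1)} for δ > 0. Let (β_k)_{k≥0}, (α_k)_{k≥0} and (M_k)_{k≥1} be positive sequences such that β₀ = 1, β_{k+1} = β_k/(1+α_k), α_k = β_k√γ₀ / √(β_k M_{k+1} + R²), and M_{k+1} ≤ 2√2 · M(ν, β_{k+1}/(k+1)) for all k ≥ 0. Then for all k ≥ 1: β_k ≤ C_ν·( R/(√γ₀ · k) + M_ν/(γ₀^{(1+ν)/2}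 · k^{(1+3ν)/2}) ). -/
/-!
Write `b_k = 1 / β_k`, so that `b_{k+1} = b_k + √γ₀ / √(β_k M_{k+1} + R²)`. Since `α_k ≤ 1`, we have
`β_{k+1} ≥ β_k / 2`, and the bound on `M_{k+1}` becomes `√(β_k M_{k+1}) ≤ 3 β_k^θ K_k` with
`θ = ν / (ν + 1)` and `K_k = M_ν^{1/(ν+1)} (k+1)^{(1-ν)/(2(ν+1))}`. Hence
`b_{k+1} ≥ b_k + (√γ₀ / 4) min (1 / R) (b_k^θ / K_k)`, an increment that is monotone in `b_k`.

The sequence `φ_k = min (√γ₀ k / R) (γ₀^{(1+ν)/2} k^{(1+3ν)/2} / M_ν) / 400` is a minimum of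
powers `k^p` with `p ≤ 2`, so `φ_{k+1} ≤ φ_k + 3 φ_k / k`. The exponents are balanced so that
`φ_k^{1-θ} K_k ≲ √γ₀ k`, which puts `3 φ_k / k` below the increment at `φ_k`. By comparison
`φ_k ≤ b_k`, and inverting `φ_k` gives the bound with `C_ν = 400`.
-/

open Real Set

lemma div_four_mul_min_le_div_sqrt {a x y R : ℝ} (ha : 0 ≤ a) (hx : 0 < x) (hR : 0 < R)
    (hy0 : 0 ≤ y) (hy : y ≤ (3 * x) ^ 2) : a / 4 * min (1 / R) (1 / x) ≤ a / √(y + R ^ 2) := by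
  have hsqrt : √(y + R ^ 2) ≤ 3 * x + R :=
    Real.sqrt_le_iff.mpr ⟨by positivity, by nlinarith⟩
  have hpos : 0 < √(y + R ^ 2) := Real.sqrt_pos.mpr (by positivity)
  rcases le_total x R with hxR | hRx
  · calc a / 4 * min (1 / R) (1 / x) ≤ a / 4 * (1 / R) := by gcongr; exact min_le_left _ _
      _ = a / (4 * R) := by ring
      _ ≤ a / √(y + R ^ 2) := div_le_div_of_nonneg_left ha hpos (by linarith)
  · calc a / 4 * min (1 / R) (1 / x) ≤ a / 4 * (1 / x) := by gcongr; exact min_le_right _ _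
      _ = a / (4 * x) := by ring
      _ ≤ a / √(y + R ^ 2) := div_le_div_of_nonneg_left ha hpos (by linarith)

lemma add_one_rpow_le_mul_rpow {k p : ℝ} (hk : 1 ≤ k) (hp2 : p ≤ 2) :
    (k + 1) ^ p ≤ (1 + 3 / k) * k ^ p := by
  have hk0 : 0 < k := by linarith
  have hratio : 1 ≤ (k + 1) / k := by rw [le_div_iff₀ hk0]; linarith
  calc (k + 1) ^ p = ((k + 1) / k) ^ p * k ^ p := by
        rw [← Real.mul_rpow (by positivity) hk0.le, div_mul_cancel₀ _ hk0.ne']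
    _ ≤ ((k + 1) / k) ^ (2 : ℝ) * k ^ p := by
        gcongr
    _ ≤ (1 + 3 / k) * k ^ p := by
        gcongr
        rw [Real.rpow_two, div_pow, div_le_iff₀ (by positivity)]
        field_simp
        nlinarith

lemma add_one_rpow_le_sqrt_two_mul_rpow {k e : ℝ} (hk : 1 ≤ k) (he0 : 0 ≤ e) (he : e ≤ 1 / 2) :
    (k + 1) ^ e ≤ √2 * k ^ e := by
  calc (k + 1) ^ e ≤ (2 * k) ^ e := Real.rpow_le_rpow (by linarith) (by linarith) he0
    _ = 2 ^ e * k ^ e := Real.mul_rpow zero_le_two (by linarith)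
    _ ≤ 2 ^ (1 / 2 : ℝ) * k ^ e := by
        gcongr 1
        exact Real.rpow_le_rpow_of_exponent_le one_le_two he
    _ = √2 * k ^ e := by rw [Real.sqrt_eq_rpow]

lemma inv_min_le_inv_add_inv {a b : ℝ} (ha : 0 < a) (hb : 0 < b) :
    (min a b)⁻¹ ≤ a⁻¹ + b⁻¹ := by
  rcases le_total a b with hab | hba
  · rw [min_eq_left hab]; linarith [inv_pos.mpr hb]
  · rw [min_eq_right hba]; linarith [inv_pos.mpr ha]

lemma le_of_le_add_of_add_le {φ b : ℕ → ℝ} {g : ℕ → ℝ → ℝ} {k₀ : ℕ}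
    (hg : ∀ k, MonotoneOn (g k) (Ici 0)) (hφ : ∀ k, 0 ≤ φ k) (h₀ : φ k₀ ≤ b k₀)
    (hφg : ∀ k ≥ k₀, φ (k + 1) ≤ φ k + g k (φ k))
    (hbg : ∀ k ≥ k₀, b k + g k (b k) ≤ b (k + 1)) :
    ∀ k ≥ k₀, φ k ≤ b k := by
  intro k hk
  induction k, hk using Nat.le_induction with
  | base => exact h₀
  | succ k hk ih =>
    calc φ (k + 1) ≤ φ k + g k (φ k) := hφg k hk
      _ ≤ b k + g k (b k) := add_le_add ih (hg k (hφ k) ((hφ k).trans ih) ih)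
      _ ≤ b (k + 1) := hbg k hk

lemma rpow_div_four_hundred_le {x ν : ℝ} (hx : 0 ≤ x) (hν0 : 0 ≤ ν) (hν1 : ν ≤ 1) :
    (x / 400) ^ (1 / (ν + 1)) ≤ x ^ (1 / (ν + 1)) / 20 := by
  have h20 : (20 : ℝ) ≤ 400 ^ (1 / (ν + 1)) :=
    calc (20 : ℝ) = 400 ^ (1 / 2 : ℝ) := by
          rw [← Real.sqrt_eq_rpow, show (400 : ℝ) = 20 ^ 2 by norm_num, Real.sqrt_sq (by norm_num)]
      _ ≤ 400 ^ (1 / (ν + 1)) := by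
          apply Real.rpow_le_rpow_of_exponent_le (by norm_num)
          rw [div_le_div_iff₀ (by norm_num) (by linarith)]; linarith
  rw [Real.div_rpow hx (by norm_num)]
  gcongr

lemma rpow_mul_rpow_eq_sqrt_mul {γ0 Mν k ν : ℝ} (hγ : 0 ≤ γ0) (hMν : 0 < Mν) (hk : 0 < k)
    (hν0 : 0 ≤ ν) :
    (γ0 ^ ((1 + ν) / 2) / Mν * k ^ ((1 + 3 * ν) / 2)) ^ (1 / (ν + 1))
      * (Mν ^ (1 / (ν + 1)) * k ^ ((1 - ν) / (2 * (ν + 1)))) = √γ0 * k := by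
  have hν : ν + 1 ≠ 0 := by linarith
  rw [Real.mul_rpow (by positivity) (by positivity), Real.div_rpow (by positivity) hMν.le,
    ← Real.rpow_mul hγ, ← Real.rpow_mul hk.le, Real.sqrt_eq_rpow]
  have hk' : k = k ^ ((1 + 3 * ν) / 2 * (1 / (ν + 1))) * k ^ ((1 - ν) / (2 * (ν + 1))) := by
    rw [← Real.rpow_add hk]
    conv_lhs => rw [← Real.rpow_one k]
    congr 1; field_simp; ring
  rw [show (1 + ν) / 2 * (1 / (ν + 1)) = 1 / 2 by field_simp; ring]
  nth_rewrite 3 [hk']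
  have : 0 < Mν ^ (1 / (ν + 1)) := by positivity
  field_simp

noncomputable def holderWeight (ν Mν : ℝ) (k : ℕ) : ℝ :=
  Mν ^ (1 / (ν + 1)) * ((k : ℝ) + 1) ^ ((1 - ν) / (2 * (ν + 1)))

lemma holderWeight_pos {ν Mν : ℝ} (hMν : 0 < Mν) (k : ℕ) : 0 < holderWeight ν Mν k := by
  unfold holderWeight; positivity

lemma mul_le_sq_holderWeight {ν Mν β β' M : ℝ} {k : ℕ} (hν0 : 0 ≤ ν) (hν1 : ν ≤ 1)
    (hMν : 0 < Mν) (hβ : 0 < β) (hβ' : β / 2 ≤ β')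
    (hM : M ≤ 2 * √2 * ((β' / (k + 1)) ^ ((ν - 1) / (ν + 1)) * Mν ^ (2 / (ν + 1)))) :
    β * M ≤ (3 * (β ^ (ν / (ν + 1)) * holderWeight ν Mν k)) ^ 2 := by
  set n : ℝ := (k : ℝ) + 1
  set s : ℝ := (1 - ν) / (ν + 1) with hs
  have hn : 0 < n := by positivity
  have hs0 : 0 ≤ s := div_nonneg (by linarith) (by linarith)
  have hs1 : s ≤ 1 := by rw [div_le_one (by linarith)]; linarith
  have hβ'pos : 0 < β' := by linarith
  have hflip : (β' / n) ^ ((ν - 1) / (ν + 1)) = (n / β') ^ s := by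
    rw [show (ν - 1) / (ν + 1) = -s by ring, Real.rpow_neg (by positivity), ← Real.inv_rpow
      (by positivity), inv_div]
  have hhalve : (n / β') ^ s ≤ 2 * (n / β) ^ s :=
    calc (n / β') ^ s ≤ (2 * (n / β)) ^ s := by
          gcongr
          rw [div_le_iff₀ hβ'pos]
          field_simp
          nlinarith
      _ = 2 ^ s * (n / β) ^ s := Real.mul_rpow zero_le_two (by positivity)
      _ ≤ 2 * (n / β) ^ s := by
          gcongr
          simpa using Real.rpow_le_rpow_of_exponent_le one_le_two hs1
  have hβpow : β * (n / β) ^ s = β ^ (2 * (ν / (ν + 1))) * n ^ s := by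
    rw [Real.div_rpow hn.le hβ.le, show 2 * (ν / (ν + 1)) = 1 - s by rw [hs]; field_simp; ring,
      Real.rpow_sub hβ, Real.rpow_one]
    ring
  have hrhs : (3 * (β ^ (ν / (ν + 1)) * holderWeight ν Mν k)) ^ 2
      = 9 * (β ^ (2 * (ν / (ν + 1))) * n ^ s * Mν ^ (2 / (ν + 1))) := by
    rw [holderWeight, mul_pow, mul_pow, mul_pow, ← Real.rpow_mul_natCast hβ.le,
      ← Real.rpow_mul_natCast hMν.le, ← Real.rpow_mul_natCast hn.le, Nat.cast_ofNat,
      show (1 - ν) / (2 * (ν + 1)) * 2 = s by rw [hs]; field_simp,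
      show 1 / (ν + 1) * 2 = 2 / (ν + 1) by ring, mul_comm _ (2 : ℝ)]
    ring
  have hsqrt2 : √2 ≤ 3 / 2 := by
    rw [Real.sqrt_le_left (by norm_num)]; norm_num
  have hnonneg : 0 ≤ β ^ (2 * (ν / (ν + 1))) * n ^ s * Mν ^ (2 / (ν + 1)) := by positivity
  calc β * M ≤ β * (2 * √2 * (2 * (n / β) ^ s * Mν ^ (2 / (ν + 1)))) := by
        rw [hflip] at hM
        gcongr
        exact hM.trans (by gcongr)
    _ = 4 * √2 * (β ^ (2 * (ν / (ν + 1))) * n ^ s * Mν ^ (2 / (ν + 1))) := by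
        rw [← hβpow]; ring
    _ ≤ 9 * (β ^ (2 * (ν / (ν + 1))) * n ^ s * Mν ^ (2 / (ν + 1))) := by
        gcongr; linarith
    _ = _ := hrhs.symm

noncomputable def invBetaGain (ν Mν R γ0 : ℝ) (k : ℕ) (b : ℝ) : ℝ :=
  √γ0 / 4 * min (1 / R) (b ^ (ν / (ν + 1)) / holderWeight ν Mν k)

lemma invBetaGain_monotoneOn {ν Mν R γ0 : ℝ} (hν0 : 0 ≤ ν) (hMν : 0 < Mν) (k : ℕ) :
    MonotoneOn (invBetaGain ν Mν R γ0 k) (Ici 0) := by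
  intro a ha b _ hab
  unfold invBetaGain
  have := holderWeight_pos (ν := ν) hMν k
  gcongr

lemma inv_add_invBetaGain_le {ν Mν R γ0 β α M : ℝ} {k : ℕ} (hν0 : 0 ≤ ν) (hν1 : ν ≤ 1)
    (hMν : 0 < Mν) (hR : 0 < R) (hβ : 0 < β) (hM0 : 0 ≤ M)
    (hα : α = β * √γ0 / √(β * M + R ^ 2)) (hβ' : β / 2 ≤ β / (1 + α))
    (hM : M ≤ 2 * √2 * ((β / (1 + α) / (k + 1)) ^ ((ν - 1) / (ν + 1)) * Mν ^ (2 / (ν + 1)))) :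
    β⁻¹ + invBetaGain ν Mν R γ0 k β⁻¹ ≤ (β / (1 + α))⁻¹ := by
  have hx : 0 < β ^ (ν / (ν + 1)) * holderWeight ν Mν k :=
    mul_pos (by positivity) (holderWeight_pos hMν k)
  have hinv : (β / (1 + α))⁻¹ = β⁻¹ + √γ0 / √(β * M + R ^ 2) := by
    rw [hα, inv_div]
    field_simp
  have hpow : β⁻¹ ^ (ν / (ν + 1)) / holderWeight ν Mν k
      = 1 / (β ^ (ν / (ν + 1)) * holderWeight ν Mν k) := by
    rw [Real.inv_rpow hβ.le, one_div, mul_inv, div_eq_mul_inv]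
  rw [hinv, invBetaGain, hpow]
  gcongr
  exact div_four_mul_min_le_div_sqrt (Real.sqrt_nonneg _) hx hR (by positivity)
    (mul_le_sq_holderWeight hν0 hν1 hMν hβ hβ' hM)

lemma mul_sqrt_div_sqrt_le_one {β M R γ0 : ℝ} (hβ0 : 0 ≤ β) (hβ1 : β ≤ 1) (hM : 0 ≤ M)
    (hR : 0 < R) (hγR : √γ0 ≤ R) : β * √γ0 / √(β * M + R ^ 2) ≤ 1 := by
  have hRsqrt : R ≤ √(β * M + R ^ 2) := Real.le_sqrt_of_sq_le (by nlinarith)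
  rw [div_le_one (hR.trans_le hRsqrt)]
  calc β * √γ0 ≤ 1 * R := mul_le_mul hβ1 hγR (Real.sqrt_nonneg _) zero_le_one
    _ ≤ √(β * M + R ^ 2) := by rw [one_mul]; exact hRsqrt

lemma le_one_of_succ_eq_div_one_add {β α : ℕ → ℝ} (hβ0 : β 0 = 1) (hβ : ∀ k, 0 < β k)
    (hα : ∀ k, 0 < α k) (hrec : ∀ k, β (k + 1) = β k / (1 + α k)) (k : ℕ) : β k ≤ 1 := by
  have hanti : Antitone β := antitone_nat_of_succ_le fun k => by
    rw [hrec]; exact div_le_self (hβ k).le (by linarith [hα k])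
  exact hβ0 ▸ hanti (Nat.zero_le k)

section Minorant

variable {ν Mν R γ0 : ℝ}

noncomputable def invBetaMinorant (ν Mν R γ0 : ℝ) (k : ℕ) : ℝ :=
  min (√γ0 / R * k) (γ0 ^ ((1 + ν) / 2) / Mν * (k : ℝ) ^ ((1 + 3 * ν) / 2)) / 400

lemma invBetaMinorant_nonneg (hMν : 0 ≤ Mν) (hR : 0 ≤ R) (hγ : 0 ≤ γ0) (k : ℕ) :
    0 ≤ invBetaMinorant ν Mν R γ0 k := by
  unfold invBetaMinorant; positivity

lemma invBetaMinorant_pos (hMν : 0 < Mν) (hR : 0 < R) (hγ : 0 < γ0) {k : ℕ} (hk : 1 ≤ k) :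
    0 < invBetaMinorant ν Mν R γ0 k := by
  have : (0 : ℝ) < k := by exact_mod_cast hk
  unfold invBetaMinorant; positivity

lemma invBetaMinorant_one_le_one (hR : 0 < R) (hγR : √γ0 ≤ R) :
    invBetaMinorant ν Mν R γ0 1 ≤ 1 := by
  unfold invBetaMinorant
  rw [div_le_one (by norm_num)]
  refine (min_le_left _ _).trans ?_
  rw [Nat.cast_one, mul_one, div_le_iff₀ hR]
  linarith

lemma invBetaMinorant_succ_le (hν1 : ν ≤ 1) (hMν : 0 ≤ Mν) (hR : 0 ≤ R) (hγ : 0 ≤ γ0) {k : ℕ}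
    (hk : 1 ≤ k) :
    invBetaMinorant ν Mν R γ0 (k + 1)
      ≤ invBetaMinorant ν Mν R γ0 k + 3 * invBetaMinorant ν Mν R γ0 k / k := by
  have hk' : (1 : ℝ) ≤ k := by exact_mod_cast hk
  have hlin := add_one_rpow_le_mul_rpow hk' (p := 1) (by norm_num)
  have hpow := add_one_rpow_le_mul_rpow hk' (p := (1 + 3 * ν) / 2) (by linarith)
  rw [Real.rpow_one, Real.rpow_one] at hlin
  unfold invBetaMinorant
  calc min (√γ0 / R * ↑(k + 1)) (γ0 ^ ((1 + ν) / 2) / Mν * ↑(k + 1) ^ ((1 + 3 * ν) / 2)) / 400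
      ≤ min (√γ0 / R * ((1 + 3 / k) * k))
          (γ0 ^ ((1 + ν) / 2) / Mν * ((1 + 3 / k) * k ^ ((1 + 3 * ν) / 2))) / 400 := by
        push_cast; gcongr
    _ = (1 + 3 / k)
          * (min (√γ0 / R * k) (γ0 ^ ((1 + ν) / 2) / Mν * k ^ ((1 + 3 * ν) / 2)) / 400) := by
        rw [mul_div_assoc', mul_min_of_nonneg _ _ (by positivity)]
        congr 2 <;> ring
    _ = _ := by ring

lemma three_mul_invBetaMinorant_div_le_invBetaGain (hν0 : 0 ≤ ν) (hν1 : ν ≤ 1) (hMν : 0 < Mν)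
    (hR : 0 < R) (hγ : 0 < γ0) {k : ℕ} (hk : 1 ≤ k) :
    3 * invBetaMinorant ν Mν R γ0 k / k
      ≤ invBetaGain ν Mν R γ0 k (invBetaMinorant ν Mν R γ0 k) := by
  have hk' : (1 : ℝ) ≤ k := by exact_mod_cast hk
  have hk0 : (0 : ℝ) < k := by linarith
  have hφ := invBetaMinorant_pos (ν := ν) hMν hR hγ hk
  have hK := holderWeight_pos (ν := ν) hMν k
  set φ := invBetaMinorant ν Mν R γ0 k
  unfold invBetaGain
  rw [mul_min_of_nonneg _ _ (by positivity)]
  refine le_min ?_ ?_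
  · have hφu : φ ≤ √γ0 / R * k / 400 :=
      div_le_div_of_nonneg_right (min_le_left _ _) (by norm_num)
    calc 3 * φ / k ≤ 3 * (√γ0 / R * k / 400) / k := by gcongr
      _ = 3 / 400 * (√γ0 / R) := by field_simp
      _ ≤ 1 / 4 * (√γ0 / R) := by
          have : 0 ≤ √γ0 / R := by positivity
          linarith
      _ = √γ0 / 4 * (1 / R) := by ring
  · set v := γ0 ^ ((1 + ν) / 2) / Mν * (k : ℝ) ^ ((1 + 3 * ν) / 2)
    have hφv : φ ≤ v / 400 := div_le_div_of_nonneg_right (min_le_right _ _) (by norm_num)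
    have hKle :
        holderWeight ν Mν k ≤ Mν ^ (1 / (ν + 1)) * (√2 * k ^ ((1 - ν) / (2 * (ν + 1)))) := by
      unfold holderWeight
      gcongr
      apply add_one_rpow_le_sqrt_two_mul_rpow hk' (div_nonneg (by linarith) (by linarith))
      rw [div_le_div_iff₀ (by linarith) (by norm_num)]; linarith
    have hsqrt2 : √2 ≤ 3 / 2 := by rw [Real.sqrt_le_left (by norm_num)]; norm_num
    have hkey : 12 * φ ^ (1 / (ν + 1)) * holderWeight ν Mν k ≤ √γ0 * k :=
      calc 12 * φ ^ (1 / (ν + 1)) * holderWeight ν Mν k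
          ≤ 12 * (v ^ (1 / (ν + 1)) / 20)
              * (Mν ^ (1 / (ν + 1)) * (√2 * k ^ ((1 - ν) / (2 * (ν + 1))))) := by
            gcongr
            exact (Real.rpow_le_rpow hφ.le hφv (by positivity)).trans
              (rpow_div_four_hundred_le (by positivity) hν0 hν1)
        _ = 12 * √2 / 20 * (v ^ (1 / (ν + 1))
              * (Mν ^ (1 / (ν + 1)) * k ^ ((1 - ν) / (2 * (ν + 1))))) := by ring
        _ = 12 * √2 / 20 * (√γ0 * k) := by rw [rpow_mul_rpow_eq_sqrt_mul hγ.le hMν hk0 hν0]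
        _ ≤ √γ0 * k := by
            have : 0 ≤ √γ0 * k := by positivity
            nlinarith
    have hsplit : φ ^ (ν / (ν + 1)) * φ ^ (1 / (ν + 1)) = φ := by
      rw [← Real.rpow_add hφ, ← add_div, div_self (by linarith), Real.rpow_one]
    calc 3 * φ / k = 3 * (φ ^ (ν / (ν + 1)) * φ ^ (1 / (ν + 1))) / k := by rw [hsplit]
      _ = φ ^ (ν / (ν + 1)) * (12 * φ ^ (1 / (ν + 1)) * holderWeight ν Mν k)
            / (4 * k * holderWeight ν Mν k) := by field_simp; ring
      _ ≤ φ ^ (ν / (ν + 1)) * (√γ0 * k) / (4 * k * holderWeight ν Mν k) := by gcongr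
      _ = √γ0 / 4 * (φ ^ (ν / (ν + 1)) / holderWeight ν Mν k) := by field_simp

lemma inv_invBetaMinorant_le (hMν : 0 < Mν) (hR : 0 < R) (hγ : 0 < γ0) {k : ℕ} (hk : 1 ≤ k) :
    (invBetaMinorant ν Mν R γ0 k)⁻¹
      ≤ 400 * (R / (√γ0 * k) + Mν / (γ0 ^ ((1 + ν) / 2) * (k : ℝ) ^ ((1 + 3 * ν) / 2))) := by
  have hk0 : (0 : ℝ) < k := by exact_mod_cast hk
  unfold invBetaMinorant
  rw [inv_div, div_eq_mul_inv]
  gcongr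
  calc _ ≤ (√γ0 / R * k)⁻¹ + (γ0 ^ ((1 + ν) / 2) / Mν * (k : ℝ) ^ ((1 + 3 * ν) / 2))⁻¹ :=
        inv_min_le_inv_add_inv (by positivity) (by positivity)
    _ = _ := by rw [div_mul_eq_mul_div, div_mul_eq_mul_div, inv_div, inv_div]

end Minorant

/-- Decay estimate of the step parameters `β_k` in the convex case `μ = 0`:
`β_k ≤ C_ν (R/(√γ₀ k) + M_ν/(γ₀^{(1+ν)/2} k^{(1+3ν)/2}))`. -/
theorem beta_decay_convex (ν : ℝ) (hν0 : 0 ≤ ν) (hν1 : ν ≤ 1) :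
    ∃ C : ℝ, 0 < C ∧
      ∀ (Mν R γ0 : ℝ), 0 < Mν → 0 < R → 0 < γ0 → γ0 ≤ R ^ 2 →
      ∀ (β α M : ℕ → ℝ),
        β 0 = 1 →
        (∀ k, 0 < β k) → (∀ k, 0 < α k) → (∀ k, 0 < M (k + 1)) →
        (∀ k, β (k + 1) = β k / (1 + α k)) →
        (∀ k, α k = β k * Real.sqrt γ0 / Real.sqrt (β k * M (k + 1) + R ^ 2)) →
        (∀ k : ℕ, M (k + 1) ≤ 2 * Real.sqrt 2 *
          ((β (k + 1) / (k + 1)) ^ ((ν - 1) / (ν + 1)) * Mν ^ (2 / (ν + 1)))) →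
        ∀ k : ℕ, 1 ≤ k →
          β k ≤ C * (R / (Real.sqrt γ0 * k)
            + Mν / (γ0 ^ ((1 + ν) / 2) * (k : ℝ) ^ ((1 + 3 * ν) / 2))) := by
  refine ⟨400, by norm_num, ?_⟩
  intro Mν R γ0 hMν hR hγ hγR β α M hβ0 hβ hα hM hrec hαdef hMbound
  have hsqrtγ : √γ0 ≤ R := (Real.sqrt_le_left hR.le).mpr hγR
  have hβ1 := le_one_of_succ_eq_div_one_add hβ0 hβ hα hrec
  have hgain (k : ℕ) :
      (β k)⁻¹ + invBetaGain ν Mν R γ0 k (β k)⁻¹ ≤ (β (k + 1))⁻¹ := by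
    have hα1 : α k ≤ 1 :=
      (hαdef k).trans_le (mul_sqrt_div_sqrt_le_one (hβ k).le (hβ1 k) (hM k).le hR hsqrtγ)
    have hMk := hMbound k
    rw [hrec] at hMk ⊢
    exact inv_add_invBetaGain_le hν0 hν1 hMν hR (hβ k) (hM k).le (hαdef k)
      (div_le_div_of_nonneg_left (hβ k).le (by linarith [hα k]) (by linarith)) hMk
  have hminorant : ∀ k ≥ 1, invBetaMinorant ν Mν R γ0 k ≤ (β k)⁻¹ :=
    le_of_le_add_of_add_le (invBetaGain_monotoneOn hν0 hMν)
      (invBetaMinorant_nonneg hMν.le hR.le hγ.le)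
      ((invBetaMinorant_one_le_one hR hsqrtγ).trans ((one_le_inv₀ (hβ 1)).mpr (hβ1 1)))
      (fun k hk => (invBetaMinorant_succ_le hν1 hMν.le hR.le hγ.le hk).trans
        (add_le_add_right (three_mul_invBetaMinorant_div_le_invBetaGain hν0 hν1 hMν hR hγ hk) _))
      (fun k _ => hgain k)
  intro k hk
  calc β k ≤ (invBetaMinorant ν Mν R γ0 k)⁻¹ :=
        (le_inv_comm₀ (invBetaMinorant_pos hMν hR hγ hk) (hβ k)).mp (hminorant k hk)
    _ ≤ _ := inv_invBetaMinorant_le hMν hR hγ hk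
end

section
/- Fix ν ∈ [0,1). There exists a constant C_ν > 0 depending only on ν with the following property. Let M_ν > 0, R > 0 and 0 < γ_min, and define M(ν,δ) := δ^{(ν−1)/(ν+1)} · M_ν^{2/(ν+1)} for δ > 0. Let (β_k)_{k≥0}, (α_k)_{k≥0}, (γ_k)_{k≥0} and (M_k)_{k≥1} be positive sequences such that β₀ = 1, γ_min ≤ γ_k ≤ R² for all k, β_{k+1} = β_k/(1+α_k), α_k = √(γ_k β_k) / √(β_k M_{k+1} + R²), and M_{k+1} ≤ 2√2 · M(ν, β_{k+1}/(k+1)) for all k ≥ 0. Then for all k ≥ 1: β_k ≤ C_ν·( R²/(γ_min · k²) + M_ν^{2/(1−ν)}/(γ_min^{(1+ν)/(1−ν)} · k^{(1+3ν)/(1−ν)}) ). -/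
/-!
Let `b_k = A_k + B_k` be the bound with `C` removed. By induction, `β_k ≤ C b_k` holds for all
`k ≥ 1` as soon as `β_{k+1} b_k ≤ β_k b_{k+1}` whenever `β_{k+1} > C b_{k+1}`. In that regime
`β_k ≥ β_{k+1} > C A_{k+1}` gives `γ_min β_k ≥ C R² / (k+1)²`, and the exponents of `B` are exactly
those for which `M(ν, C B_{k+1}/(k+1)) = C^((ν-1)/(ν+1)) γ_min (k+1)²`; as `M(ν, ·)` is
decreasing, `M_{k+1} ≤ 2√2 C^((ν-1)/(ν+1)) γ_min (k+1)²`. For `C` large both bounds force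
`α_k ≥ (2^m - 1)/k`, where `m` is an integer with `m ≥ 2` and `m ≥ (1+3ν)/(1-ν)`; then
`1 + α_k ≥ (1 + 1/k)^m ≥ b_k / b_{k+1}`, which is the required step.
-/

open Real

lemma le_const_mul_of_ratio_le {u b : ℕ → ℝ} {C : ℝ} (hb : ∀ n, 1 ≤ n → 0 < b n)
    (h1 : u 1 ≤ C * b 1)
    (hstep : ∀ n, 1 ≤ n → C * b (n + 1) < u (n + 1) → u (n + 1) * b n ≤ u n * b (n + 1)) :
    ∀ k, 1 ≤ k → u k ≤ C * b k := by
  intro k hk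
  induction k, hk using Nat.le_induction with
  | base => exact h1
  | succ n hn ih =>
    by_contra! hlt
    have hbn := hb n hn
    have hratio := hstep n hn hlt
    have hih : u n * b (n + 1) ≤ C * b n * b (n + 1) := by gcongr; exact (hb _ (by omega)).le
    nlinarith

lemma one_add_pow_le_one_add_two_pow_sub_one_mul {x : ℝ} (hx0 : 0 ≤ x) (hx1 : x ≤ 1) :
    ∀ m : ℕ, (1 + x) ^ m ≤ 1 + (2 ^ m - 1) * x
  | 0 => by simp
  | m + 1 => by
    have ih := one_add_pow_le_one_add_two_pow_sub_one_mul hx0 hx1 m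
    have h2m : (1 : ℝ) ≤ 2 ^ m := one_le_pow₀ (by norm_num)
    calc (1 + x) ^ (m + 1) = (1 + x) ^ m * (1 + x) := pow_succ _ _
      _ ≤ (1 + (2 ^ m - 1) * x) * (1 + x) := by gcongr
      _ ≤ 1 + (2 ^ (m + 1) - 1) * x := by
        rw [pow_succ]; nlinarith [mul_le_mul_of_nonneg_left hx1 hx0]

lemma div_rpow_le_one_add_inv_pow_mul {a p x : ℝ} {m : ℕ} (ha : 0 ≤ a) (hx : 1 ≤ x)
    (hpm : p ≤ m) : a / x ^ p ≤ (1 + x⁻¹) ^ m * (a / (x + 1) ^ p) := by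
  have hx0 : 0 < x := by linarith
  have hsplit : a / x ^ p = (1 + x⁻¹) ^ p * (a / (x + 1) ^ p) := by
    rw [show x + 1 = (1 + x⁻¹) * x by field_simp, mul_rpow (by positivity) hx0.le]
    field_simp
  rw [hsplit, ← rpow_natCast]
  gcongr
  exact le_add_of_nonneg_right (by positivity)

lemma le_sqrt_div_sqrt_of_sq_mul_le {a b t : ℝ} (hb : 0 < b) (ht : 0 ≤ t) (h : t ^ 2 * b ≤ a) :
    t ≤ √a / √b := by
  rw [← sqrt_div' _ hb.le, le_sqrt ht (div_nonneg (le_trans (by positivity) h) hb.le),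
    le_div_iff₀ hb]
  exact h

lemma le_max_rpow_rpow_inv {K p : ℝ} (hK : 0 ≤ K) (hp : 0 < p) : K ≤ max K (K ^ p) ^ p⁻¹ :=
  calc K = (K ^ p) ^ p⁻¹ := (rpow_rpow_inv hK hp.ne').symm
    _ ≤ _ := by gcongr; exact le_max_right _ _

lemma holder_term_rpow {ν Mν γmin C x : ℝ} (hν0 : ν + 1 ≠ 0) (hν1 : 1 - ν ≠ 0) (hMν : 0 < Mν)
    (hγmin : 0 < γmin) (hC : 0 < C) (hx : 0 < x) :
    (C * (Mν ^ (2 / (1 - ν)) / (γmin ^ ((1 + ν) / (1 - ν)) * x ^ ((1 + 3 * ν) / (1 - ν)))) / x)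
        ^ ((ν - 1) / (ν + 1)) * Mν ^ (2 / (ν + 1))
      = C ^ ((ν - 1) / (ν + 1)) * γmin * x ^ 2 := by
  apply log_injOn_pos (by simp only [Set.mem_Ioi]; positivity)
    (by simp only [Set.mem_Ioi]; positivity)
  simp (disch := positivity) only [log_mul, log_div, log_rpow, log_pow]
  field_simp
  ring

noncomputable def holderRate (ν Mν R γmin x : ℝ) : ℝ :=
  R ^ 2 / (γmin * x ^ 2)
    + Mν ^ (2 / (1 - ν)) / (γmin ^ ((1 + ν) / (1 - ν)) * x ^ ((1 + 3 * ν) / (1 - ν)))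

section holderRate

variable {ν Mν R γmin : ℝ}

lemma holderRate_pos (hMν : 0 < Mν) (hγmin : 0 < γmin) {x : ℝ} (hx : 0 < x) :
    0 < holderRate ν Mν R γmin x := by
  unfold holderRate; positivity

lemma one_le_holderRate_one (hMν : 0 < Mν) (hγmin : 0 < γmin) (hR : γmin ≤ R ^ 2) :
    1 ≤ holderRate ν Mν R γmin 1 := by
  unfold holderRate
  rw [one_pow, mul_one, one_rpow, mul_one]
  exact le_add_of_le_of_nonneg ((one_le_div hγmin).2 hR) (by positivity)

lemma holderRate_le_one_add_mul_succ (hMν : 0 < Mν) (hγmin : 0 < γmin) {m : ℕ} (hm2 : 2 ≤ m)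
    (hqm : (1 + 3 * ν) / (1 - ν) ≤ m) {x : ℝ} (hx : 1 ≤ x) :
    holderRate ν Mν R γmin x ≤ (1 + (2 ^ m - 1) / x) * holderRate ν Mν R γmin (x + 1) := by
  have hratio : holderRate ν Mν R γmin x ≤ (1 + x⁻¹) ^ m * holderRate ν Mν R γmin (x + 1) := by
    unfold holderRate
    rw [mul_add]
    gcongr ?_ + ?_
    · have := div_rpow_le_one_add_inv_pow_mul (a := R ^ 2 / γmin) (by positivity) hx
        (show (2 : ℝ) ≤ m by exact_mod_cast hm2)
      simpa only [rpow_two, div_div] using this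
    · simpa only [div_div] using div_rpow_le_one_add_inv_pow_mul
        (a := Mν ^ (2 / (1 - ν)) / γmin ^ ((1 + ν) / (1 - ν))) (by positivity) hx hqm
  refine hratio.trans ?_
  gcongr
  · exact (holderRate_pos hMν hγmin (by linarith)).le
  · simpa only [div_eq_mul_inv] using one_add_pow_le_one_add_two_pow_sub_one_mul
      (inv_nonneg.2 (by linarith)) (inv_le_one_of_one_le₀ hx) m

lemma le_mul_rpow_of_holderRate_lt (hν0 : -1 < ν) (hν1 : ν < 1) (hMν : 0 < Mν)
    (hγmin : 0 < γmin) {C x β M : ℝ} (hC : 0 < C) (hx : 0 < x)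
    (hlt : C * holderRate ν Mν R γmin x < β)
    (hM : M ≤ 2 * √2 * ((β / x) ^ ((ν - 1) / (ν + 1)) * Mν ^ (2 / (ν + 1)))) :
    M ≤ 2 * √2 * (C ^ ((ν - 1) / (ν + 1)) * γmin * x ^ 2) := by
  have hB : C * (Mν ^ (2 / (1 - ν)) / (γmin ^ ((1 + ν) / (1 - ν)) * x ^ ((1 + 3 * ν) / (1 - ν))))
      < β := by
    refine lt_of_le_of_lt ?_ hlt
    unfold holderRate
    gcongr
    exact le_add_of_nonneg_left (by positivity)
  rw [← holder_term_rpow (by linarith) (by linarith) hMν hγmin hC hx]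
  refine hM.trans ?_
  gcongr 2 * √2 * (?_ * _)
  exact rpow_le_rpow_of_nonpos (by positivity) (by gcongr)
    (div_nonpos_of_nonpos_of_nonneg (by linarith) (by linarith))

lemma div_le_sqrt_div_sqrt_of_holderRate_lt (hν0 : -1 < ν) (hν1 : ν < 1) (hMν : 0 < Mν)
    (hγmin : 0 < γmin) {C L x β β' γ M : ℝ} (hL : 0 < L) (hx : 1 ≤ x) (hCR : 32 * L ^ 2 ≤ C)
    (hCM : 32 * L ^ 2 ≤ C ^ ((1 - ν) / (1 + ν))) (hβ : 0 < β) (hβ' : β' ≤ β) (hM : 0 < M)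
    (hγ : γmin ≤ γ) (hlt : C * holderRate ν Mν R γmin (x + 1) < β')
    (hMb : M ≤ 2 * √2 * ((β' / (x + 1)) ^ ((ν - 1) / (ν + 1)) * Mν ^ (2 / (ν + 1)))) :
    L / x ≤ √(γ * β) / √(β * M + R ^ 2) := by
  have hC : 0 < C := lt_of_lt_of_le (by positivity) hCR
  have hx0 : 0 < x := by linarith
  set t := L / x
  have ht : t * (x + 1) ≤ 2 * L := by
    rw [div_mul_eq_mul_div, div_le_iff₀ hx0]; nlinarith
  have hCe : C ^ ((ν - 1) / (ν + 1)) * (32 * L ^ 2) ≤ 1 := by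
    rw [show (ν - 1) / (ν + 1) = -((1 - ν) / (1 + ν)) by ring, rpow_neg hC.le,
      inv_mul_le_one₀ (by positivity)]
    exact hCM
  have hMt : t ^ 2 * M ≤ γmin / 2 := by
    have hsqrt2 : √2 < 3 / 2 := by
      rw [sqrt_lt' (by norm_num)]; norm_num
    have hMC := le_mul_rpow_of_holderRate_lt hν0 hν1 hMν hγmin hC (by linarith) hlt hMb
    have hCe0 : 0 < C ^ ((ν - 1) / (ν + 1)) := by positivity
    calc t ^ 2 * M ≤ t ^ 2 * (2 * √2 * (C ^ ((ν - 1) / (ν + 1)) * γmin * (x + 1) ^ 2)) := by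
          gcongr
      _ = 2 * √2 * C ^ ((ν - 1) / (ν + 1)) * γmin * (t * (x + 1)) ^ 2 := by ring
      _ ≤ 3 * C ^ ((ν - 1) / (ν + 1)) * γmin * (2 * L) ^ 2 := by gcongr; linarith
      _ ≤ γmin / 2 := by nlinarith
  have hRt : t ^ 2 * R ^ 2 ≤ γmin * β / 2 := by
    have hA : C * (R ^ 2 / (γmin * (x + 1) ^ 2)) ≤ β := by
      refine le_trans (le_of_lt (lt_of_le_of_lt ?_ hlt)) hβ'
      unfold holderRate
      gcongr
      exact le_add_of_nonneg_right (by positivity)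
    rw [mul_div_assoc', div_le_iff₀ (by positivity)] at hA
    have hCRt : C * R ^ 2 * t ^ 2 ≤ β * γmin * (2 * L) ^ 2 := by
      calc C * R ^ 2 * t ^ 2 ≤ β * (γmin * (x + 1) ^ 2) * t ^ 2 := by gcongr
        _ = β * γmin * (t * (x + 1)) ^ 2 := by ring
        _ ≤ β * γmin * (2 * L) ^ 2 := by gcongr
    have h32 := mul_le_mul_of_nonneg_right hCR (by positivity : 0 ≤ R ^ 2 * t ^ 2)
    have h4L : (4 * L ^ 2) * (8 * (t ^ 2 * R ^ 2)) ≤ (4 * L ^ 2) * (γmin * β) := by linarith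
    linarith [le_of_mul_le_mul_left h4L (by positivity), mul_pos hγmin hβ]
  apply le_sqrt_div_sqrt_of_sq_mul_le (by positivity) (by positivity)
  nlinarith

lemma succ_mul_holderRate_le_of_lt (hν0 : -1 < ν) (hν1 : ν < 1) (hMν : 0 < Mν)
    (hγmin : 0 < γmin) {m : ℕ} (hm2 : 2 ≤ m) (hqm : (1 + 3 * ν) / (1 - ν) ≤ m) {C : ℝ}
    (hCR : 32 * (2 ^ m - 1) ^ 2 ≤ C) (hCM : 32 * (2 ^ m - 1) ^ 2 ≤ C ^ ((1 - ν) / (1 + ν)))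
    {x β β' α γ M : ℝ} (hx : 1 ≤ x) (hβ : 0 < β) (hM : 0 < M) (hγ : γmin ≤ γ)
    (hβ' : β' = β / (1 + α)) (hα : α = √(γ * β) / √(β * M + R ^ 2))
    (hMb : M ≤ 2 * √2 * ((β' / (x + 1)) ^ ((ν - 1) / (ν + 1)) * Mν ^ (2 / (ν + 1))))
    (hlt : C * holderRate ν Mν R γmin (x + 1) < β') :
    β' * holderRate ν Mν R γmin x ≤ β * holderRate ν Mν R γmin (x + 1) := by
  have hα0 : 0 ≤ α := hα ▸ by positivity
  have hβ'0 : 0 ≤ β' := hβ' ▸ by positivity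
  have hββ' : β' ≤ β := hβ' ▸ div_le_self hβ.le (by linarith)
  have hLα : (2 ^ m - 1) / x ≤ α := hα ▸ div_le_sqrt_div_sqrt_of_holderRate_lt hν0 hν1 hMν
    hγmin (sub_pos.2 (one_lt_pow₀ (by norm_num) (by omega))) hx hCR hCM hβ hββ' hM hγ hlt hMb
  calc β' * holderRate ν Mν R γmin x
      ≤ β' * ((1 + (2 ^ m - 1) / x) * holderRate ν Mν R γmin (x + 1)) := by
        gcongr; exact holderRate_le_one_add_mul_succ hMν hγmin hm2 hqm hx
    _ ≤ β' * ((1 + α) * holderRate ν Mν R γmin (x + 1)) := by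
        gcongr; exact (holderRate_pos hMν hγmin (by linarith)).le
    _ = β * holderRate ν Mν R γmin (x + 1) := by
        rw [hβ']; field_simp

end holderRate

/-- Decay estimate of the step parameters `β_k` in the strongly convex Hölder case
`μ > 0`, `ν < 1`:
`β_k ≤ C_ν (R²/(γ_min k²) + M_ν^{2/(1-ν)}/(γ_min^{(1+ν)/(1-ν)} k^{(1+3ν)/(1-ν)}))`. -/
theorem beta_decay_strongly_convex_holder (ν : ℝ) (hν0 : 0 ≤ ν) (hν1 : ν < 1) :
    ∃ C : ℝ, 0 < C ∧
      ∀ (Mν R γmin : ℝ), 0 < Mν → 0 < R → 0 < γmin →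
      ∀ (β α γ M : ℕ → ℝ),
        β 0 = 1 →
        (∀ k, 0 < β k) → (∀ k, 0 < α k) → (∀ k, 0 < M (k + 1)) →
        (∀ k, γmin ≤ γ k) → (∀ k, γ k ≤ R ^ 2) →
        (∀ k, β (k + 1) = β k / (1 + α k)) →
        (∀ k, α k = Real.sqrt (γ k * β k) / Real.sqrt (β k * M (k + 1) + R ^ 2)) →
        (∀ k : ℕ, M (k + 1) ≤ 2 * Real.sqrt 2 *
          ((β (k + 1) / (k + 1)) ^ ((ν - 1) / (ν + 1)) * Mν ^ (2 / (ν + 1)))) →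
        ∀ k : ℕ, 1 ≤ k →
          β k ≤ C * (R ^ 2 / (γmin * (k : ℝ) ^ 2)
            + Mν ^ (2 / (1 - ν)) /
              (γmin ^ ((1 + ν) / (1 - ν)) * (k : ℝ) ^ ((1 + 3 * ν) / (1 - ν)))) := by
  set m := ⌈(1 + 3 * ν) / (1 - ν)⌉₊ + 2
  have hqm : (1 + 3 * ν) / (1 - ν) ≤ m := by
    push_cast [m]; linarith [Nat.le_ceil ((1 + 3 * ν) / (1 - ν))]
  set K : ℝ := 32 * (2 ^ m - 1) ^ 2
  have hK : 1 ≤ K := by nlinarith [pow_le_pow_right₀ (by norm_num : (1 : ℝ) ≤ 2) (by omega : 2 ≤ m)]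
  set C := max K (K ^ ((1 + ν) / (1 - ν)))
  have hCM : K ≤ C ^ ((1 - ν) / (1 + ν)) := by
    rw [← inv_div]; exact le_max_rpow_rpow_inv (by linarith) (by apply div_pos <;> linarith)
  have hC : 1 ≤ C := hK.trans (le_max_left _ _)
  refine ⟨C, by linarith, fun Mν R γmin hMν _ hγmin β α γ M hβ0 hβpos hαpos hMpos hγlo hγhi
    hβrec hαdef hMb => le_const_mul_of_ratio_le (b := fun k : ℕ => holderRate ν Mν R γmin k)
    (fun n hn => holderRate_pos hMν hγmin (by exact_mod_cast hn)) ?_ fun n hn hlt => ?_⟩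
  · calc β 1 ≤ β 0 := hβrec 0 ▸ div_le_self (hβpos 0).le (by linarith [hαpos 0])
      _ ≤ holderRate ν Mν R γmin 1 :=
        hβ0 ▸ one_le_holderRate_one hMν hγmin ((hγlo 0).trans (hγhi 0))
      _ ≤ C * holderRate ν Mν R γmin ((1 : ℕ) : ℝ) := by
        rw [Nat.cast_one]; exact le_mul_of_one_le_left (holderRate_pos hMν hγmin one_pos).le hC
  · simp only [Nat.cast_succ] at hlt ⊢
    exact succ_mul_holderRate_le_of_lt (by linarith) hν1 hMν hγmin (by omega) hqm
      (le_max_left _ _) hCM (by exact_mod_cast hn) (hβpos n) (hMpos n) (hγlo n) (hβrec n)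
      (hαdef n) (hMb n) hlt
end

section
/- There exists an absolute constant C > 0 with the following property. Let L > 0, R > 0 and 0 < γ_min. Let (β_k)_{k≥0}, (α_k)_{k≥0}, (γ_k)_{k≥0} and (M_k)_{k≥1} be positive sequences such that β₀ = 1, γ_min ≤ γ_k ≤ R² for all k, β_{k+1} = β_k/(1+α_k), α_k = √(γ_k β_k) / √(β_k M_{k+1} + R²), and M_{k+1} ≤ 2√2·L for all k ≥ 0. Then for all k ≥ 1: β_k ≤ C·( R²/(γ_min · k²) + exp(−(k/(8√3))·√(γ_min/L)) ). -/
/-!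
While `β_k ≥ θ := R²/(3L)`, the denominator of `α_k` is at most `6Lβ_k`, so
`α_k ≥ a := √(γ_min/(6L))` and `β_k` decays geometrically; in this regime `a ≤ 1`, so each step
gains a factor `exp(-a/2)`. Once `β_k ≤ θ`, the denominator is at most `2R²`, so
`α_k ≥ c √β_k` with `c := √(γ_min/(2R²))`, and `1/√β_k` grows by at least `c/3` per step.
Since `β` is antitone, the regime it is in at step `⌈k/2⌉` persists over the remaining `k/2` steps.
-/

open Real

section Recursion

variable {β α : ℕ → ℝ}

lemma antitone_of_eq_div_one_add (hβ : ∀ k, 0 ≤ β k) (hα : ∀ k, 0 ≤ α k)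
    (hrec : ∀ k, β (k + 1) = β k / (1 + α k)) : Antitone β :=
  antitone_nat_of_succ_le fun k => by
    rw [hrec]
    exact div_le_self (hβ k) (by linarith [hα k])

lemma le_div_one_add_pow_of_le {a : ℝ} (ha : 0 ≤ a) (hβ : ∀ k, 0 ≤ β k)
    (hrec : ∀ k, β (k + 1) = β k / (1 + α k)) {n : ℕ} (hα : ∀ i < n, a ≤ α i) :
    β n ≤ β 0 / (1 + a) ^ n := by
  induction n with
  | zero => simp
  | succ n ih =>
    calc β (n + 1) = β n / (1 + α n) := hrec n
      _ ≤ β n / (1 + a) := by gcongr; exacts [hβ n, hα n n.lt_succ_self]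
      _ ≤ β 0 / (1 + a) ^ n / (1 + a) := by gcongr; exact ih fun i hi => hα i (by omega)
      _ = β 0 / (1 + a) ^ (n + 1) := by rw [pow_succ, div_div]

lemma one_add_div_three_le_sqrt_one_add {t : ℝ} (h0 : 0 ≤ t) (h3 : t ≤ 3) :
    1 + t / 3 ≤ √(1 + t) := by
  rw [Real.le_sqrt (by linarith) (by linarith)]
  nlinarith

lemma inv_sqrt_add_div_three_le {b c t : ℝ} (hb : 0 < b) (hb1 : b ≤ 1) (hc0 : 0 ≤ c)
    (hc3 : c ≤ 3) (ht : c * √b ≤ t) :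
    (√b)⁻¹ + c / 3 ≤ (√(b / (1 + t)))⁻¹ := by
  have hs : 0 < √b := Real.sqrt_pos.mpr hb
  have hcs : c * √b ≤ 3 := by nlinarith [Real.sqrt_le_one.mpr hb1]
  calc (√b)⁻¹ + c / 3 = (1 + c * √b / 3) / √b := by field_simp
    _ ≤ √(1 + c * √b) / √b := by
      gcongr
      exact one_add_div_three_le_sqrt_one_add (by positivity) hcs
    _ ≤ √(1 + t) / √b := by gcongr
    _ = (√(b / (1 + t)))⁻¹ := by rw [Real.sqrt_div hb.le, inv_div]

lemma inv_sqrt_add_mul_le_inv_sqrt {c : ℝ} (hc0 : 0 ≤ c) (hc3 : c ≤ 3) (hβ : ∀ k, 0 < β k)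
    (hβ1 : ∀ k, β k ≤ 1) (hrec : ∀ k, β (k + 1) = β k / (1 + α k)) {n : ℕ}
    (hα : ∀ i, n ≤ i → c * √(β i) ≤ α i) (m : ℕ) :
    (√(β n))⁻¹ + m * (c / 3) ≤ (√(β (n + m)))⁻¹ := by
  induction m with
  | zero => simp
  | succ m ih =>
    calc (√(β n))⁻¹ + (m + 1 : ℕ) * (c / 3) = ((√(β n))⁻¹ + m * (c / 3)) + c / 3 := by
          push_cast; ring
      _ ≤ (√(β (n + m)))⁻¹ + c / 3 := by gcongr
      _ ≤ (√(β (n + m + 1)))⁻¹ := by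
          rw [hrec]
          exact inv_sqrt_add_div_three_le (hβ _) (hβ1 _) hc0 hc3 (hα _ (by omega))

end Recursion

lemma inv_one_add_le_exp_neg_half {a : ℝ} (h0 : 0 ≤ a) (h1 : a ≤ 1) :
    (1 + a)⁻¹ ≤ exp (-(a / 2)) :=
  calc (1 + a)⁻¹ = -(a / (1 + a)) + 1 := by field_simp; ring
    _ ≤ exp (-(a / (1 + a))) := Real.add_one_le_exp _
    _ ≤ exp (-(a / 2)) := by gcongr; linarith

structure StepRecursion (L R γmin : ℝ) (β α γ M : ℕ → ℝ) : Prop where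
  L_pos : 0 < L
  R_pos : 0 < R
  γmin_pos : 0 < γmin
  γmin_le_R_sq : γmin ≤ R ^ 2
  β_zero : β 0 = 1
  β_pos : ∀ k, 0 < β k
  M_nonneg : ∀ k, 0 ≤ M (k + 1)
  γmin_le_γ : ∀ k, γmin ≤ γ k
  M_le : ∀ k, M (k + 1) ≤ 3 * L
  β_succ : ∀ k, β (k + 1) = β k / (1 + α k)
  α_eq : ∀ k, α k = √(γ k * β k) / √(β k * M (k + 1) + R ^ 2)

namespace StepRecursion

variable {L R γmin : ℝ} {β α γ M : ℕ → ℝ}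

lemma alpha_nonneg (h : StepRecursion L R γmin β α γ M) (k : ℕ) : 0 ≤ α k := by
  rw [h.α_eq]
  positivity

lemma antitone (h : StepRecursion L R γmin β α γ M) : Antitone β :=
  antitone_of_eq_div_one_add (fun k => (h.β_pos k).le) h.alpha_nonneg h.β_succ

lemma beta_le_one (h : StepRecursion L R γmin β α γ M) (k : ℕ) : β k ≤ 1 :=
  h.β_zero ▸ h.antitone (Nat.zero_le k)

lemma sqrt_div_le_alpha (h : StepRecursion L R γmin β α γ M) (k : ℕ) {D : ℝ}
    (hD : β k * M (k + 1) + R ^ 2 ≤ D) : √(γmin * β k / D) ≤ α k := by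
  have hβ := h.β_pos k
  have hden : 0 < β k * M (k + 1) + R ^ 2 := by
    have := h.M_nonneg k
    have := h.R_pos
    positivity
  rw [h.α_eq, ← Real.sqrt_div' _ hden.le]
  refine Real.sqrt_le_sqrt (div_le_div₀ ?_ ?_ hden hD)
  · exact mul_nonneg (h.γmin_pos.le.trans (h.γmin_le_γ k)) hβ.le
  · exact mul_le_mul_of_nonneg_right (h.γmin_le_γ k) hβ.le

lemma sqrt_le_alpha_of_le_beta (h : StepRecursion L R γmin β α γ M) {k : ℕ}
    (hk : R ^ 2 / (3 * L) ≤ β k) : √(γmin / (6 * L)) ≤ α k := by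
  have hβ := h.β_pos k
  have hR : R ^ 2 ≤ β k * (3 * L) := (div_le_iff₀ (by linarith [h.L_pos])).mp hk
  have hM := mul_le_mul_of_nonneg_left (h.M_le k) hβ.le
  calc √(γmin / (6 * L)) = √(γmin * β k / (6 * L * β k)) := by
        rw [mul_div_mul_right _ _ hβ.ne']
    _ ≤ α k := h.sqrt_div_le_alpha k (by linarith)

lemma mul_sqrt_le_alpha_of_beta_le (h : StepRecursion L R γmin β α γ M) {k : ℕ}
    (hk : β k ≤ R ^ 2 / (3 * L)) : √(γmin / (2 * R ^ 2)) * √(β k) ≤ α k := by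
  have hβ := h.β_pos k
  have hR : β k * (3 * L) ≤ R ^ 2 := (le_div_iff₀ (by linarith [h.L_pos])).mp hk
  have hM := mul_le_mul_of_nonneg_left (h.M_le k) hβ.le
  calc √(γmin / (2 * R ^ 2)) * √(β k) = √(γmin * β k / (2 * R ^ 2)) := by
        rw [← Real.sqrt_mul (div_nonneg h.γmin_pos.le (by positivity)), div_mul_eq_mul_div]
    _ ≤ α k := h.sqrt_div_le_alpha k (by linarith)

lemma beta_le_exp_of_le_beta (h : StepRecursion L R γmin β α γ M) {k : ℕ}
    (hk : R ^ 2 / (3 * L) ≤ β ((k + 1) / 2)) :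
    β k ≤ exp (-((k : ℝ) / (8 * √3)) * √(γmin / L)) := by
  set n := (k + 1) / 2
  set a := √(γmin / (6 * L))
  have hL := h.L_pos
  have ha0 : 0 ≤ a := Real.sqrt_nonneg _
  have ha1 : a ≤ 1 := by
    have hR : R ^ 2 ≤ 3 * L := (div_le_one (by positivity)).mp (hk.trans (h.beta_le_one n))
    refine Real.sqrt_le_one.mpr ((div_le_one (by positivity)).mpr ?_)
    linarith [h.γmin_le_R_sq]
  have hgeom : β n ≤ (1 + a)⁻¹ ^ n := by
    have := le_div_one_add_pow_of_le ha0 (fun k => (h.β_pos k).le) h.β_succ (n := n)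
      fun i hi => h.sqrt_le_alpha_of_le_beta (hk.trans (h.antitone hi.le))
    rwa [h.β_zero, one_div, ← inv_pow] at this
  -- `√(γmin/L) = √6 · a` and `√6 / (8√3) = √2 / 8 ≤ 1 / 4`
  have hrate : √(γmin / L) / (8 * √3) ≤ a / 4 := by
    have hγ := h.γmin_pos
    have hγL : 0 ≤ γmin / L := by positivity
    have ha2 : a ^ 2 = γmin / (6 * L) := Real.sq_sqrt (by positivity)
    rw [← pow_le_pow_iff_left₀ (by positivity) (by positivity) two_ne_zero, div_pow, div_pow,
      mul_pow, Real.sq_sqrt zero_le_three, Real.sq_sqrt hγL, ha2]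
    field_simp
    nlinarith
  have hkn : (k : ℝ) ≤ 2 * n := by exact_mod_cast (by omega : k ≤ 2 * n)
  have hexp : -(n * (a / 2)) ≤ -((k : ℝ) / (8 * √3)) * √(γmin / L) := by
    rw [neg_mul, neg_le_neg_iff]
    calc (k : ℝ) / (8 * √3) * √(γmin / L) = k * (√(γmin / L) / (8 * √3)) := by ring
      _ ≤ k * (a / 4) := by gcongr
      _ ≤ n * (a / 2) := by nlinarith
  calc β k ≤ β n := h.antitone (by omega)
    _ ≤ (1 + a)⁻¹ ^ n := hgeom
    _ ≤ exp (-(a / 2)) ^ n := by gcongr; exact inv_one_add_le_exp_neg_half ha0 ha1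
    _ = exp (-(n * (a / 2))) := by rw [← Real.exp_nat_mul]; ring_nf
    _ ≤ exp (-((k : ℝ) / (8 * √3)) * √(γmin / L)) := Real.exp_le_exp.mpr hexp

lemma beta_le_div_sq_of_beta_le (h : StepRecursion L R γmin β α γ M) {k : ℕ} (hk1 : 1 ≤ k)
    (hk : β ((k + 1) / 2) ≤ R ^ 2 / (3 * L)) :
    β k ≤ 72 * (R ^ 2 / (γmin * k ^ 2)) := by
  set n := (k + 1) / 2
  set c := √(γmin / (2 * R ^ 2))
  have hR := h.R_pos
  have hγ := h.γmin_pos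
  have hc0 : 0 < c := Real.sqrt_pos.mpr (by positivity)
  have hc1 : c ≤ 1 :=
    Real.sqrt_le_one.mpr ((div_le_one (by positivity)).mpr (by linarith [h.γmin_le_R_sq]))
  have hgrowth := inv_sqrt_add_mul_le_inv_sqrt hc0.le (by linarith) h.β_pos h.beta_le_one
    h.β_succ (n := n) (fun i hi => h.mul_sqrt_le_alpha_of_beta_le ((h.antitone hi).trans hk))
    (k - n)
  rw [Nat.add_sub_cancel' (by omega : n ≤ k), Nat.cast_sub (by omega : n ≤ k)] at hgrowth
  have hstart : 1 ≤ (√(β n))⁻¹ :=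
    (one_le_inv₀ (Real.sqrt_pos.mpr (h.β_pos n))).mpr (Real.sqrt_le_one.mpr (h.beta_le_one n))
  have hnk : 2 * (n : ℝ) ≤ k + 1 := by exact_mod_cast (by omega : 2 * n ≤ k + 1)
  have hlin : c * k / 6 ≤ (√(β k))⁻¹ := by
    nlinarith [mul_nonneg hc0.le (by linarith : 0 ≤ (k : ℝ) + 1 - 2 * n)]
  have hk0 : (0 : ℝ) < k := by exact_mod_cast hk1
  have hsqrt : √(β k) ≤ (c * k / 6)⁻¹ :=
    (le_inv_comm₀ (by positivity) (Real.sqrt_pos.mpr (h.β_pos k))).mp hlin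
  calc β k ≤ (c * k / 6)⁻¹ ^ 2 := (Real.sqrt_le_iff.mp hsqrt).2
    _ = 72 * (R ^ 2 / (γmin * k ^ 2)) := by
      rw [inv_pow, div_pow, mul_pow, Real.sq_sqrt (by positivity)]
      field_simp
      ring

end StepRecursion

/-- Decay estimate of the step parameters `β_k` in the strongly convex Lipschitz
case (`ν = 1`): `β_k ≤ C (R²/(γ_min k²) + exp(-(k/(8√3))√(γ_min/L)))`. -/
theorem beta_decay_strongly_convex_lipschitz :
    ∃ C : ℝ, 0 < C ∧
      ∀ (L R γmin : ℝ), 0 < L → 0 < R → 0 < γmin →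
      ∀ (β α γ M : ℕ → ℝ),
        β 0 = 1 →
        (∀ k, 0 < β k) → (∀ k, 0 < α k) → (∀ k, 0 < M (k + 1)) →
        (∀ k, γmin ≤ γ k) → (∀ k, γ k ≤ R ^ 2) →
        (∀ k, β (k + 1) = β k / (1 + α k)) →
        (∀ k, α k = Real.sqrt (γ k * β k) / Real.sqrt (β k * M (k + 1) + R ^ 2)) →
        (∀ k : ℕ, M (k + 1) ≤ 2 * Real.sqrt 2 * L) →
        ∀ k : ℕ, 1 ≤ k →
          β k ≤ C * (R ^ 2 / (γmin * (k : ℝ) ^ 2)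
            + Real.exp (-((k : ℝ) / (8 * Real.sqrt 3)) * Real.sqrt (γmin / L))) := by
  refine ⟨72, by norm_num, ?_⟩
  intro L R γmin hL hR hγmin β α γ M hβ0 hβ _ hM hγlo hγhi hrec hα hMle k hk
  have hsqrt2 : 2 * √2 ≤ 3 := by nlinarith [Real.sq_sqrt (zero_le_two : (0 : ℝ) ≤ 2)]
  have h : StepRecursion L R γmin β α γ M :=
    { L_pos := hL, R_pos := hR, γmin_pos := hγmin, γmin_le_R_sq := (hγlo 0).trans (hγhi 0),
      β_zero := hβ0, β_pos := hβ, M_nonneg := fun k => (hM k).le, γmin_le_γ := hγlo,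
      M_le := fun k => (hMle k).trans (by nlinarith), β_succ := hrec, α_eq := hα }
  have hpoly : 0 ≤ R ^ 2 / (γmin * k ^ 2) := by positivity
  have hexp := Real.exp_pos (-((k : ℝ) / (8 * √3)) * √(γmin / L))
  rcases le_total (R ^ 2 / (3 * L)) (β ((k + 1) / 2)) with hθ | hθ
  · linarith [h.beta_le_exp_of_le_beta hθ]
  · linarith [h.beta_le_div_sq_of_beta_le hk hθ]
end

section
/- Let φ : ℝ^n → ℝ be differentiable, μ ≥ 0, and let f : ℝ^n → ℝ be differentiable with f(x) ≥ f(y) + ⟨∇f(y), x − y⟩ + μ D_φ(x,y) for all x, y ∈ ℝ^n. Let A be a real m×n matrix, b ∈ ℝ^m, and suppose x* ∈ ℝ^n and λ* ∈ ℝ^m satisfy Ax* = b and ∇f(x*) + Aᵀλ* = 0. Let β₀, γ₀ > 0 and set β(t) = β₀e^{−t} and γ(t) = μ + (γ₀ − μ)e^{−t}, and assume γ(t) > 0 for all t ≥ 0. Let x, v : [0,∞) → ℝ^n and λ : [0,∞) → ℝ^m be differentiable, with t ↦ ∇φ(v(t)) differentiable, satisfying for all t ≥ 0: x'(t) = v(t)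 − x(t); γ(t)·(d/dt)∇φ(v(t)) = μ(∇φ(x(t)) − ∇φ(v(t))) − ∇f(x(t)) − Aᵀλ(t); β(t)·λ'(t) = A v(t) − b. Define E(t) := L(x(t),λ*) − L(x*,λ(t)) + γ(t)·D_φ(x*, v(t)) + (β(t)/2)‖λ(t) − λ*‖². Then E is differentiable and E'(t) ≤ −E(t) − μ·D_φ(v(t), x(t)) for all t ≥ 0. -/
open RealInnerProductSpace

/-!
Differentiating term by term, with `β' = -β` and `γ' = μ - γ`, and substituting the two flow
equations tested against `x* - v` and `λ - λ*`, the dual terms cancel because `A x* = b`. By the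
three-point identity of the Bregman divergence, `E' + E + μ D_φ(v, x)` then collapses to
`f(x) + ⟪∇f(x), x* - x⟫ + μ D_φ(x*, x) - f(x*)`, which is `≤ 0` by the relative strong convexity
of `f`.
-/

section Calculus

variable {F : Type*} [NormedAddCommGroup F] [InnerProductSpace ℝ F] [CompleteSpace F]
  {s : Set ℝ} {t : ℝ}

theorem DifferentiableAt.hasDerivWithinAt_comp_gradient {f : F → ℝ} {c : ℝ → F} {c' : F}
    (hf : DifferentiableAt ℝ f (c t)) (hc : HasDerivWithinAt c c' s t) :
    HasDerivWithinAt (fun τ => f (c τ)) ⟪gradient f (c t), c'⟫ s t := by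
  rw [inner_gradient_left]
  exact hf.hasFDerivAt.comp_hasDerivWithinAt t hc

theorem hasDerivAt_of_eq_add_mul_exp_neg {g : ℝ → ℝ} {a c : ℝ}
    (hg : ∀ τ, g τ = a + c * Real.exp (-τ)) (t : ℝ) : HasDerivAt g (a - g t) t := by
  rw [funext hg]
  refine (((hasDerivAt_neg t).exp.const_mul c).const_add a).congr_deriv ?_
  ring

end Calculus

section Bregman

variable {n : ℕ} (φ : EuclideanSpace ℝ (Fin n) → ℝ)

theorem bregman_add_bregman (x y z : EuclideanSpace ℝ (Fin n)) :
    bregman φ x y + bregman φ y z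
      = bregman φ x z + ⟪gradient φ z - gradient φ y, x - y⟫ := by
  simp only [bregman, inner_sub_left, inner_sub_right]
  ring

variable {φ} {s : Set ℝ} {t : ℝ}

theorem HasDerivWithinAt.const_bregman {v : ℝ → EuclideanSpace ℝ (Fin n)}
    {v' w' : EuclideanSpace ℝ (Fin n)} (p : EuclideanSpace ℝ (Fin n))
    (hφ : DifferentiableAt ℝ φ (v t)) (hv : HasDerivWithinAt v v' s t)
    (hw : HasDerivWithinAt (fun τ => gradient φ (v τ)) w' s t) :
    HasDerivWithinAt (fun τ => bregman φ p (v τ)) (-⟪w', p - v t⟫) s t := by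
  refine (((hφ.hasDerivWithinAt_comp_gradient hv).const_sub (φ p)).sub
    (hw.inner ℝ (hv.const_sub p))).congr_deriv ?_
  rw [inner_neg_right]
  ring

end Bregman

theorem abpd_flow_lyapunov_derivative_general {n m : ℕ}
    (φ : EuclideanSpace ℝ (Fin n) → ℝ) (hφ : Differentiable ℝ φ)
    (μ : ℝ)
    (f : EuclideanSpace ℝ (Fin n) → ℝ) (hf : Differentiable ℝ f)
    (hconv : ∀ x y : EuclideanSpace ℝ (Fin n),
      f x ≥ f y + ⟪gradient f y, x - y⟫ + μ * bregman φ x y)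
    (A : EuclideanSpace ℝ (Fin n) →L[ℝ] EuclideanSpace ℝ (Fin m))
    (b : EuclideanSpace ℝ (Fin m))
    (xs : EuclideanSpace ℝ (Fin n)) (ls : EuclideanSpace ℝ (Fin m))
    (hfeas : A xs = b)
    (β0 γ0 : ℝ)
    (β γ : ℝ → ℝ)
    (hβ : ∀ t, β t = β0 * Real.exp (-t))
    (hγ : ∀ t, γ t = μ + (γ0 - μ) * Real.exp (-t))
    (x v : ℝ → EuclideanSpace ℝ (Fin n)) (lam : ℝ → EuclideanSpace ℝ (Fin m))
    (v' : ℝ → EuclideanSpace ℝ (Fin n)) (w' : ℝ → EuclideanSpace ℝ (Fin n))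
    (lam' : ℝ → EuclideanSpace ℝ (Fin m))
    -- the flow equations on `[0, ∞)`
    (hx : ∀ t ≥ (0 : ℝ), HasDerivWithinAt x (v t - x t) (Set.Ici 0) t)
    (hv : ∀ t ≥ (0 : ℝ), HasDerivWithinAt v (v' t) (Set.Ici 0) t)
    (hw : ∀ t ≥ (0 : ℝ),
      HasDerivWithinAt (fun s => gradient φ (v s)) (w' t) (Set.Ici 0) t)
    (hweq : ∀ t ≥ (0 : ℝ), γ t • w' t
      = μ • (gradient φ (x t) - gradient φ (v t))
        - gradient f (x t) - (ContinuousLinearMap.adjoint A) (lam t))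
    (hl : ∀ t ≥ (0 : ℝ), HasDerivWithinAt lam (lam' t) (Set.Ici 0) t)
    (hleq : ∀ t ≥ (0 : ℝ), β t • lam' t = A (v t) - b)
    -- the Lyapunov function
    (E : ℝ → ℝ)
    (hE : ∀ t, E t = (f (x t) + ⟪ls, A (x t) - b⟫) - (f xs + ⟪lam t, A xs - b⟫)
      + γ t * bregman φ xs (v t) + β t / 2 * ‖lam t - ls‖ ^ 2) :
    ∃ E' : ℝ → ℝ, ∀ t ≥ (0 : ℝ),
      HasDerivWithinAt E (E' t) (Set.Ici 0) t ∧
      E' t ≤ -E t - μ * bregman φ (v t) (x t) := by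
  have hβ' (t : ℝ) : HasDerivAt β (-β t) t := by
    simpa using
      hasDerivAt_of_eq_add_mul_exp_neg (a := 0) (c := β0) (fun τ => by simp [hβ]) t
  have hγ' : ∀ t, HasDerivAt γ (μ - γ t) t := hasDerivAt_of_eq_add_mul_exp_neg hγ
  obtain rfl : E = fun t => f (x t) + ⟪ls, A (x t) - b⟫ - f xs
      + γ t * bregman φ xs (v t) + β t / 2 * ‖lam t - ls‖ ^ 2 := by
    funext t; simp [hE, hfeas]
  refine ⟨fun t => ⟪gradient f (x t), v t - x t⟫ + ⟪ls, A (v t - x t)⟫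
      + ((μ - γ t) * bregman φ xs (v t) - γ t * ⟪w' t, xs - v t⟫)
      + (-β t / 2 * ‖lam t - ls‖ ^ 2 + β t * ⟪lam t - ls, lam' t⟫),
    fun t ht => ⟨?_, ?_⟩⟩
  · have hf_x := (hf (x t)).hasDerivWithinAt_comp_gradient (hx t ht)
    have hAx := (hasDerivWithinAt_const t _ ls).inner ℝ
      ((A.hasFDerivAt.comp_hasDerivWithinAt t (hx t ht)).sub_const b)
    have hD := (hγ' t).hasDerivWithinAt.mul ((hv t ht).const_bregman xs (hφ (v t)) (hw t ht))
    have hN := ((hβ' t).hasDerivWithinAt.div_const 2).mul ((hl t ht).sub_const ls).norm_sq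
    refine ((((hf_x.add hAx).sub_const (f xs)).add hD).add hN).congr_deriv ?_
    simp only [inner_zero_left]
    ring
  · have hflow_v : γ t * ⟪w' t, xs - v t⟫
        = μ * ⟪gradient φ (x t) - gradient φ (v t), xs - v t⟫ - ⟪gradient f (x t), xs - v t⟫
          - ⟪lam t, b - A (v t)⟫ := by
      rw [← real_inner_smul_left, hweq t ht, inner_sub_left, inner_sub_left,
        real_inner_smul_left, ContinuousLinearMap.adjoint_inner_left, map_sub, hfeas]
    have hflow_l : β t * ⟪lam t - ls, lam' t⟫ = ⟪lam t - ls, A (v t) - b⟫ := by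
      rw [← inner_smul_right, hleq t ht]
    have hthree := congrArg (μ * ·) (bregman_add_bregman φ xs (v t) (x t))
    have hstrong := hconv xs (x t)
    simp only [map_sub, inner_sub_left, inner_sub_right] at hflow_v hflow_l hthree hstrong ⊢
    linarith

/-- Along the accelerated Bregman primal-dual flow, the Lyapunov function `E`
is differentiable and satisfies `E'(t) ≤ -E(t) - μ D_φ(v(t), x(t))`. -/
theorem abpd_flow_lyapunov_derivative {n m : ℕ}
    (φ : EuclideanSpace ℝ (Fin n) → ℝ) (hφ : Differentiable ℝ φ)
    (μ : ℝ) (hμ : 0 ≤ μ)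
    (f : EuclideanSpace ℝ (Fin n) → ℝ) (hf : Differentiable ℝ f)
    (hconv : ∀ x y : EuclideanSpace ℝ (Fin n),
      f x ≥ f y + ⟪gradient f y, x - y⟫ + μ * bregman φ x y)
    (A : EuclideanSpace ℝ (Fin n) →L[ℝ] EuclideanSpace ℝ (Fin m))
    (b : EuclideanSpace ℝ (Fin m))
    (xs : EuclideanSpace ℝ (Fin n)) (ls : EuclideanSpace ℝ (Fin m))
    (hfeas : A xs = b)
    (hopt : gradient f xs + (ContinuousLinearMap.adjoint A) ls = 0)
    (β0 γ0 : ℝ) (hβ0 : 0 < β0) (hγ0 : 0 < γ0)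
    (β γ : ℝ → ℝ)
    (hβ : ∀ t, β t = β0 * Real.exp (-t))
    (hγ : ∀ t, γ t = μ + (γ0 - μ) * Real.exp (-t))
    (hγpos : ∀ t ≥ (0 : ℝ), 0 < γ t)
    (x v : ℝ → EuclideanSpace ℝ (Fin n)) (lam : ℝ → EuclideanSpace ℝ (Fin m))
    (v' : ℝ → EuclideanSpace ℝ (Fin n)) (w' : ℝ → EuclideanSpace ℝ (Fin n))
    (lam' : ℝ → EuclideanSpace ℝ (Fin m))
    -- the flow equations on `[0, ∞)`
    (hx : ∀ t ≥ (0 : ℝ), HasDerivWithinAt x (v t - x t) (Set.Ici 0) t)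
    (hv : ∀ t ≥ (0 : ℝ), HasDerivWithinAt v (v' t) (Set.Ici 0) t)
    (hw : ∀ t ≥ (0 : ℝ),
      HasDerivWithinAt (fun s => gradient φ (v s)) (w' t) (Set.Ici 0) t)
    (hweq : ∀ t ≥ (0 : ℝ), γ t • w' t
      = μ • (gradient φ (x t) - gradient φ (v t))
        - gradient f (x t) - (ContinuousLinearMap.adjoint A) (lam t))
    (hl : ∀ t ≥ (0 : ℝ), HasDerivWithinAt lam (lam' t) (Set.Ici 0) t)
    (hleq : ∀ t ≥ (0 : ℝ), β t • lam' t = A (v t) - b)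
    -- the Lyapunov function
    (E : ℝ → ℝ)
    (hE : ∀ t, E t = (f (x t) + ⟪ls, A (x t) - b⟫) - (f xs + ⟪lam t, A xs - b⟫)
      + γ t * bregman φ xs (v t) + β t / 2 * ‖lam t - ls‖ ^ 2) :
    ∃ E' : ℝ → ℝ, ∀ t ≥ (0 : ℝ),
      HasDerivWithinAt E (E' t) (Set.Ici 0) t ∧
      E' t ≤ -E t - μ * bregman φ (v t) (x t) :=
  abpd_flow_lyapunov_derivative_general φ hφ μ f hf hconv A b xs ls hfeas β0 γ0 β γ hβ hγ x v lam v'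
    w' lam' hx hv hw hweq hl hleq E hE
end

section
/- Let Q ⊆ ℝ^n be a nonempty convex set, φ : ℝ^n → ℝ differentiable and 1-strongly convex on Q, i.e. D_φ(x,y) ≥ (1/2)‖x − y‖² for all x, y ∈ Q; let μ > 0 and h : ℝ^n → ℝ differentiable and μ-convex on Q relative to φ, i.e. h(x) ≥ h(y) + ⟨∇h(y), x − y⟩ + μ D_φ(x,y) for all x, y ∈ Q; let g : ℝ^n → ℝ be convex on Q, A a real m×n matrix, b ∈ ℝ^m. Suppose x* ∈ Q with Ax* = b, λ* ∈ ℝ^m, and there exist ζ, w ∈ ℝ^n with: g(x) ≥ g(x*) + ⟨ζ, x − x*⟩ for all x ∈ Q; ⟨w, x − x*⟩ ≤ 0 for all x ∈ Q; and ∇h(x*) + ζ + w + Aᵀλ* = 0. Let x_k, v_k ∈ Q, λ_k ∈ ℝ^m, γ_k ≥ γ_min > 0, β_k > 0 and B ≥ 0 be such that L(x_k,λ*) − L(x*,λ_k) + γ_k·D_φ(x*, v_k) + (β_k/2)‖λ_k − λ*‖² ≤ B. Then γ_min·‖v_k − x*‖² + μ·‖x_k − x*‖² ≤ 2B. -/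
open RealInnerProductSpace

/-!
By the KKT conditions at `(x*, λ*)` the primal-dual gap `L(x_k, λ*) - L(x*, λ_k)` dominates the
excess of `h x_k` over its linearization at `x*`, which relative convexity bounds below by
`μ D_φ(x_k, x*)`. Every term of the Lyapunov function is therefore nonnegative, and the 1-strong
convexity of `φ` turns the two Bregman terms into squared distances.
-/

section Lagrangian

variable {E F : Type*} [NormedAddCommGroup E] [InnerProductSpace ℝ E] [CompleteSpace E]
  [NormedAddCommGroup F] [InnerProductSpace ℝ F] [CompleteSpace F]

noncomputable def lagrangian (h g : E → ℝ) (A : E →L[ℝ] F) (b : F) (x : E) (l : F) : ℝ :=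
  h x + g x + ⟪l, A x - b⟫

theorem le_lagrangian_gap_of_kkt {h g : E → ℝ} {A : E →L[ℝ] F} {b : F} {xs x d ζ w : E}
    {ls l : F} {c : ℝ} (hfeas : A xs = b) (hh : h xs + ⟪d, x - xs⟫ + c ≤ h x)
    (hg : g xs + ⟪ζ, x - xs⟫ ≤ g x) (hw : ⟪w, x - xs⟫ ≤ 0)
    (hopt : d + ζ + w + ContinuousLinearMap.adjoint A ls = 0) :
    c ≤ lagrangian h g A b x ls - lagrangian h g A b xs l := by
  have hdual : ⟪ls, A x - b⟫ = ⟪ContinuousLinearMap.adjoint A ls, x - xs⟫ := by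
    rw [← hfeas, ← map_sub, ContinuousLinearMap.adjoint_inner_left]
  have hstat : ⟪d, x - xs⟫ + ⟪ζ, x - xs⟫ + ⟪w, x - xs⟫
      + ⟪ContinuousLinearMap.adjoint A ls, x - xs⟫ = 0 := by
    simp only [← inner_add_left, hopt, inner_zero_left]
  simp only [lagrangian, hdual, hfeas, sub_self, inner_zero_right]
  linarith

end Lagrangian

theorem lyapunov_distance_estimate_general {n m : ℕ}
    (Q : Set (EuclideanSpace ℝ (Fin n)))
    (φ : EuclideanSpace ℝ (Fin n) → ℝ)
    (hφsc : ∀ x ∈ Q, ∀ y ∈ Q, bregman φ x y ≥ 1 / 2 * ‖x - y‖ ^ 2)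
    (μ : ℝ) (hμ : 0 < μ)
    (h : EuclideanSpace ℝ (Fin n) → ℝ)
    (hconv : ∀ x ∈ Q, ∀ y ∈ Q,
      h x ≥ h y + ⟪gradient h y, x - y⟫ + μ * bregman φ x y)
    (g : EuclideanSpace ℝ (Fin n) → ℝ)
    (A : EuclideanSpace ℝ (Fin n) →L[ℝ] EuclideanSpace ℝ (Fin m))
    (b : EuclideanSpace ℝ (Fin m))
    (xs : EuclideanSpace ℝ (Fin n)) (hxsQ : xs ∈ Q) (hfeas : A xs = b)
    (ls : EuclideanSpace ℝ (Fin m))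
    (ζ w : EuclideanSpace ℝ (Fin n))
    (hζ : ∀ x ∈ Q, g x ≥ g xs + ⟪ζ, x - xs⟫)
    (hw : ∀ x ∈ Q, ⟪w, x - xs⟫ ≤ 0)
    (hopt : gradient h xs + ζ + w + (ContinuousLinearMap.adjoint A) ls = 0)
    (xk vk : EuclideanSpace ℝ (Fin n)) (hxkQ : xk ∈ Q) (hvkQ : vk ∈ Q)
    (lk : EuclideanSpace ℝ (Fin m))
    (γk γmin βk B : ℝ) (hγmin : 0 < γmin) (hγk : γmin ≤ γk) (hβk : 0 < βk)
    (hbound : (h xk + g xk + ⟪ls, A xk - b⟫) - (h xs + g xs + ⟪lk, A xs - b⟫)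
      + γk * bregman φ xs vk + βk / 2 * ‖lk - ls‖ ^ 2 ≤ B) :
    γmin * ‖vk - xs‖ ^ 2 + μ * ‖xk - xs‖ ^ 2 ≤ 2 * B := by
  have hgap : μ * bregman φ xk xs ≤ lagrangian h g A b xk ls - lagrangian h g A b xs lk :=
    le_lagrangian_gap_of_kkt hfeas (hconv xk hxkQ xs hxsQ) (hζ xk hxkQ) (hw xk hxkQ) hopt
  have hDx := hφsc xk hxkQ xs hxsQ
  have hDv := hφsc xs hxsQ vk hvkQ
  have hγD : γmin * bregman φ xs vk ≤ γk * bregman φ xs vk :=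
    mul_le_mul_of_nonneg_right hγk (le_trans (by positivity) hDv)
  rw [norm_sub_rev] at hDv
  have hμx : μ * ‖xk - xs‖ ^ 2 ≤ 2 * (μ * bregman φ xk xs) := by
    linarith [mul_le_mul_of_nonneg_left hDx hμ.le]
  have hγv : γmin * ‖vk - xs‖ ^ 2 ≤ 2 * (γmin * bregman φ xs vk) := by
    linarith [mul_le_mul_of_nonneg_left hDv hγmin.le]
  have hdual : 0 ≤ βk / 2 * ‖lk - ls‖ ^ 2 := by positivity
  unfold lagrangian at hgap
  linarith

/-- Strong-convexity distance estimate: a bound `B` on the discrete Lyapunov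
function yields `γ_min ‖v_k - x*‖² + μ ‖x_k - x*‖² ≤ 2B`. -/
theorem lyapunov_distance_estimate {n m : ℕ}
    (Q : Set (EuclideanSpace ℝ (Fin n))) (hQne : Q.Nonempty) (hQconv : Convex ℝ Q)
    (φ : EuclideanSpace ℝ (Fin n) → ℝ) (hφ : Differentiable ℝ φ)
    (hφsc : ∀ x ∈ Q, ∀ y ∈ Q, bregman φ x y ≥ 1 / 2 * ‖x - y‖ ^ 2)
    (μ : ℝ) (hμ : 0 < μ)
    (h : EuclideanSpace ℝ (Fin n) → ℝ) (hh : Differentiable ℝ h)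
    (hconv : ∀ x ∈ Q, ∀ y ∈ Q,
      h x ≥ h y + ⟪gradient h y, x - y⟫ + μ * bregman φ x y)
    (g : EuclideanSpace ℝ (Fin n) → ℝ) (hg : ConvexOn ℝ Q g)
    (A : EuclideanSpace ℝ (Fin n) →L[ℝ] EuclideanSpace ℝ (Fin m))
    (b : EuclideanSpace ℝ (Fin m))
    (xs : EuclideanSpace ℝ (Fin n)) (hxsQ : xs ∈ Q) (hfeas : A xs = b)
    (ls : EuclideanSpace ℝ (Fin m))
    (ζ w : EuclideanSpace ℝ (Fin n))
    (hζ : ∀ x ∈ Q, g x ≥ g xs + ⟪ζ, x - xs⟫)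
    (hw : ∀ x ∈ Q, ⟪w, x - xs⟫ ≤ 0)
    (hopt : gradient h xs + ζ + w + (ContinuousLinearMap.adjoint A) ls = 0)
    (xk vk : EuclideanSpace ℝ (Fin n)) (hxkQ : xk ∈ Q) (hvkQ : vk ∈ Q)
    (lk : EuclideanSpace ℝ (Fin m))
    (γk γmin βk B : ℝ) (hγmin : 0 < γmin) (hγk : γmin ≤ γk) (hβk : 0 < βk)
    (hB : 0 ≤ B)
    (hbound : (h xk + g xk + ⟪ls, A xk - b⟫) - (h xs + g xs + ⟪lk, A xs - b⟫)
      + γk * bregman φ xs vk + βk / 2 * ‖lk - ls‖ ^ 2 ≤ B) :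
    γmin * ‖vk - xs‖ ^ 2 + μ * ‖xk - xs‖ ^ 2 ≤ 2 * B :=
  lyapunov_distance_estimate_general Q φ hφsc μ hμ h hconv g A b xs hxsQ hfeas ls ζ w hζ hw hopt xk
    vk hxkQ hvkQ lk γk γmin βk B hγmin hγk hβk hbound
end
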